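/- arXiv:1409.8224 — 11 statements merged into one kernel-verified Lean document; each statement's English description precedes it below -/
import Mathlib

section
/- Let μ : ℝ → ℝ be a C¹, increasing, concave function on [0,∞) with μ(0)=0. For σ > 0 define φ_σ(w) = μ(wσ)(σ - wσ) for w ∈ [0,1]. Then φ_σ is strictly concave on [0,1] and admits a unique maximizer w* ∈ (0,1). -/
/-- For μ C¹, increasing, concave on [0,∞) with μ(0)=0 and σ>0, the function
    φ_σ(w) = μ(wσ)(σ-wσ) is strictly concave on [0,1] and has a unique maximizer in (0,1). -/
theorem stmt0 (μ : ℝ → ℝ)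
    (hC1 : ContDiff ℝ 1 μ)
    (hmono : StrictMonoOn μ (Set.Ici 0))
    (hconc : ConcaveOn ℝ (Set.Ici 0) μ)
    (h0 : μ 0 = 0)
    (σ : ℝ) (hσ : 0 < σ) :
    StrictConcaveOn ℝ (Set.Icc 0 1) (fun w : ℝ => μ (w * σ) * (σ - w * σ)) ∧
    ∃! w : ℝ, w ∈ Set.Ioo (0:ℝ) 1 ∧
      IsMaxOn (fun w : ℝ => μ (w * σ) * (σ - w * σ)) (Set.Icc 0 1) w := by
  have hμ0 : ∀ x : ℝ, 0 ≤ x → 0 ≤ μ x := by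
    intro x hx
    rcases eq_or_lt_of_le hx with h | h
    · simp [← h, h0]
    · have := hmono (Set.self_mem_Ici) (Set.mem_Ici.2 hx) h
      linarith [this]
  -- strict concavity
  have key : StrictConcaveOn ℝ (Set.Icc 0 1) (fun w : ℝ => μ (w * σ) * (σ - w * σ)) := by
    refine ⟨convex_Icc 0 1, ?_⟩
    intro x hx y hy hxy a b ha hb hab
    -- wlog x < y
    wlog hlt : x < y generalizing x y a b
    · have hlt' : y < x := lt_of_le_of_ne (not_lt.1 hlt) (Ne.symm hxy)
      have := this hy hx (Ne.symm hxy) hb ha (by linarith) hlt'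
      simpa [add_comm, mul_comm] using this
    obtain ⟨hx0, hx1⟩ := hx
    obtain ⟨hy0, hy1⟩ := hy
    have hA : 0 ≤ μ (x * σ) := hμ0 _ (mul_nonneg hx0 hσ.le)
    have hAB : μ (x * σ) < μ (y * σ) := hmono (Set.mem_Ici.2 (mul_nonneg hx0 hσ.le))
      (Set.mem_Ici.2 (mul_nonneg hy0 hσ.le)) (by nlinarith)
    have hB : 0 ≤ μ (y * σ) := le_of_lt (lt_of_le_of_lt hA hAB)
    have hCD : σ - y * σ < σ - x * σ := by nlinarith
    have hD : 0 ≤ σ - y * σ := by nlinarith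
    have hconcz : a * μ (x * σ) + b * μ (y * σ) ≤ μ ((a * x + b * y) * σ) := by
      have h := hconc.2 (Set.mem_Ici.2 (mul_nonneg hx0 hσ.le))
        (Set.mem_Ici.2 (mul_nonneg hy0 hσ.le)) ha.le hb.le hab
      have heq : a • (x * σ) + b • (y * σ) = (a * x + b * y) * σ := by
        simp only [smul_eq_mul]; ring
      rw [heq] at h
      simpa [smul_eq_mul] using h
    have hFnn : 0 ≤ a * μ (x * σ) + b * μ (y * σ) :=
      add_nonneg (mul_nonneg ha.le hA) (mul_nonneg hb.le hB)
    have hb' : b = 1 - a := by linarith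
    have hG : σ - (a * x + b * y) * σ = a * (σ - x * σ) + b * (σ - y * σ) := by
      rw [hb']; ring
    have hGnn : 0 ≤ σ - (a * x + b * y) * σ := by
      rw [hG]
      exact add_nonneg (mul_nonneg ha.le (le_of_lt (lt_of_le_of_lt hD hCD)))
        (mul_nonneg hb.le hD)
    simp only [smul_eq_mul]
    have hkey : 0 < a * b * ((μ (y * σ) - μ (x * σ)) * ((σ - x * σ) - (σ - y * σ))) := by
      apply mul_pos (mul_pos ha hb)
      apply mul_pos (by linarith) (by linarith)
    calc a * (μ (x * σ) * (σ - x * σ)) + b * (μ (y * σ) * (σ - y * σ))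
        < (a * μ (x * σ) + b * μ (y * σ)) * (a * (σ - x * σ) + b * (σ - y * σ)) := by
          rw [hb'] at hkey ⊢; nlinarith [hkey]
      _ ≤ μ ((a * x + b * y) * σ) * (σ - (a * x + b * y) * σ) := by
          rw [hG]; exact mul_le_mul_of_nonneg_right hconcz (by rw [← hG]; exact hGnn)
  refine ⟨key, ?_⟩
  -- continuity
  have hcont : Continuous (fun w : ℝ => μ (w * σ) * (σ - w * σ)) := by
    exact (hC1.continuous.comp (continuous_id.mul continuous_const)).mul
      (continuous_const.sub (continuous_id.mul continuous_const))
  obtain ⟨w, hwmem, hwmax⟩ := isCompact_Icc.exists_isMaxOn (Set.nonempty_Icc.2 zero_le_one)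
    hcont.continuousOn
  have hhalf : (0:ℝ) < μ ((1/2) * σ) * (σ - (1/2) * σ) := by
    have h1 : 0 < μ ((1/2) * σ) := by
      have := hmono Set.self_mem_Ici (Set.mem_Ici.2 (by positivity : (0:ℝ) ≤ (1/2) * σ))
        (by positivity)
      simpa [h0] using this
    have h2 : 0 < σ - (1/2) * σ := by linarith
    positivity
  have hval : μ ((1/2) * σ) * (σ - (1/2) * σ) ≤ μ (w * σ) * (σ - w * σ) :=
    hwmax (by constructor <;> norm_num : (1/2 : ℝ) ∈ Set.Icc (0:ℝ) 1)
  have hwIoo : w ∈ Set.Ioo (0:ℝ) 1 := by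
    constructor
    · rcases eq_or_lt_of_le hwmem.1 with h | h
      · exfalso; rw [← h] at hval; simp [h0] at hval; linarith
      · exact h
    · rcases eq_or_lt_of_le hwmem.2 with h | h
      · exfalso; rw [h] at hval; simp at hval; linarith
      · exact h
  refine ⟨w, ⟨hwIoo, hwmax⟩, ?_⟩
  rintro y ⟨hyIoo, hymax⟩
  exact key.eq_of_isMaxOn hymax hwmax (Set.Ioo_subset_Icc_self hyIoo) hwmem
end

section
/- Let μ : ℝ → ℝ be C¹, increasing, concave on [0,∞) with μ(0)=0, and define β(σ,s) = μ(s)(σ - s). For every σ > 0 there exists a unique ŝ(σ) ∈ (0,σ) maximizing s ↦ β(σ,s) over [0,σ], and at this maximizer μ(ŝ(σ)) = μ'(ŝ(σ))(σ - ŝ(σ)). -/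
/-!
On `[0, σ]` the product `μ s * (σ - s)` of a concave, strictly increasing factor and a
nonnegative, strictly decreasing affine factor is strictly concave: the defect from the chord is
`a * b * (μ x - μ y) * (x - y) > 0`. It vanishes at both endpoints and is positive at `σ / 2`,
so by compactness it has a maximizer in `(0, σ)`, unique by strict concavity, where its
derivative `μ' s * (σ - s) - μ s` vanishes.
-/

open Set

theorem StrictMonoOn.strictConcaveOn_mul_sub {μ : ℝ → ℝ} {s : Set ℝ} (σ : ℝ)
    (hmono : StrictMonoOn μ s) (hconc : ConcaveOn ℝ s μ) :
    StrictConcaveOn ℝ (s ∩ Iic σ) (fun x => μ x * (σ - x)) := by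
  refine ⟨hconc.1.inter (convex_Iic σ), ?_⟩
  intro x hx y hy hxy a b ha hb hab
  simp only [smul_eq_mul]
  have hμ : a * μ x + b * μ y ≤ μ (a * x + b * y) := hconc.2 hx.1 hy.1 ha.le hb.le hab
  have hσ : 0 ≤ σ - (a * x + b * y) := by
    have hx' : a * x ≤ a * σ := mul_le_mul_of_nonneg_left hx.2 ha.le
    have hy' : b * y ≤ b * σ := mul_le_mul_of_nonneg_left hy.2 hb.le
    have hsplit : σ = a * σ + b * σ := by rw [← add_mul, hab, one_mul]
    linarith
  have hcross : 0 < (μ x - μ y) * (x - y) := by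
    rcases hxy.lt_or_gt with h | h
    · exact mul_pos_of_neg_of_neg (sub_neg.2 (hmono hx.1 hy.1 h)) (sub_neg.2 h)
    · exact mul_pos (sub_pos.2 (hmono hy.1 hx.1 h)) (sub_pos.2 h)
  have hchord : (a * μ x + b * μ y) * (σ - (a * x + b * y)) =
      a * (μ x * (σ - x)) + b * (μ y * (σ - y)) + a * b * ((μ x - μ y) * (x - y)) := by
    obtain rfl : b = 1 - a := by linarith
    ring
  calc a * (μ x * (σ - x)) + b * (μ y * (σ - y))
      < (a * μ x + b * μ y) * (σ - (a * x + b * y)) := by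
        rw [hchord]; have := mul_pos (mul_pos ha hb) hcross; linarith
    _ ≤ μ (a * x + b * y) * (σ - (a * x + b * y)) := mul_le_mul_of_nonneg_right hμ hσ

theorem exists_mem_Ioo_isMaxOn_mul_sub {μ : ℝ → ℝ} {σ : ℝ} (hσ : 0 < σ)
    (hcont : ContinuousOn μ (Icc 0 σ)) (hmono : StrictMonoOn μ (Ici 0)) (h0 : μ 0 = 0) :
    ∃ s ∈ Ioo 0 σ, IsMaxOn (fun x => μ x * (σ - x)) (Icc 0 σ) s := by
  obtain ⟨s, hs, hmax⟩ := isCompact_Icc.exists_isMaxOn (nonempty_Icc.2 hσ.le)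
    (hcont.mul (continuousOn_const.sub continuousOn_id))
  have hhalf : 0 < μ (σ / 2) * (σ - σ / 2) := by
    have := hmono self_mem_Ici (mem_Ici.2 (by positivity)) (half_pos hσ)
    rw [h0] at this
    exact mul_pos this (by linarith)
  have hpos : 0 < μ s * (σ - s) := hhalf.trans_le (hmax ⟨by positivity, by linarith⟩)
  refine ⟨s, ⟨hs.1.lt_of_ne ?_, hs.2.lt_of_ne ?_⟩, hmax⟩
  · rintro rfl; simp [h0] at hpos
  · rintro rfl; simp at hpos

theorem IsMaxOn.apply_eq_deriv_mul_sub {μ : ℝ → ℝ} {s σ : ℝ} (hs : s ∈ Ioo 0 σ)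
    (hmax : IsMaxOn (fun x => μ x * (σ - x)) (Icc 0 σ) s) (hμ : DifferentiableAt ℝ μ s) :
    μ s = deriv μ s * (σ - s) := by
  have hderiv : HasDerivAt (fun x => μ x * (σ - x)) (deriv μ s * (σ - s) + μ s * (-1)) s :=
    hμ.hasDerivAt.mul ((hasDerivAt_id s).const_sub σ)
  have hlocal := hmax.isLocalMax (Icc_mem_nhds hs.1 hs.2)
  linarith [hlocal.hasDerivAt_eq_zero hderiv]

/-- For μ C¹, increasing, concave with μ(0)=0 and β(σ,s)=μ(s)(σ-s), for every σ>0 there is a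
    unique ŝ ∈ (0,σ) maximizing β(σ,·) over [0,σ], and there μ(ŝ) = μ'(ŝ)(σ-ŝ). -/
theorem stmt1 (μ : ℝ → ℝ)
    (hC1 : ContDiff ℝ 1 μ)
    (hmono : StrictMonoOn μ (Set.Ici 0))
    (hconc : ConcaveOn ℝ (Set.Ici 0) μ)
    (h0 : μ 0 = 0)
    (σ : ℝ) (hσ : 0 < σ) :
    ∃! s : ℝ, s ∈ Set.Ioo 0 σ ∧
      IsMaxOn (fun s : ℝ => μ s * (σ - s)) (Set.Icc 0 σ) s ∧
      μ s = deriv μ s * (σ - s) := by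
  obtain ⟨s, hs, hmax⟩ := exists_mem_Ioo_isMaxOn_mul_sub hσ hC1.continuous.continuousOn hmono h0
  have hdiff : Differentiable ℝ μ := hC1.differentiable one_ne_zero
  refine ⟨s, ⟨hs, hmax, hmax.apply_eq_deriv_mul_sub hs (hdiff s)⟩, ?_⟩
  rintro t ⟨ht, htmax, -⟩
  have hstrict := hmono.strictConcaveOn_mul_sub σ hconc
  rw [Ici_inter_Iic] at hstrict
  exact hstrict.eq_of_isMaxOn htmax hmax (Ioo_subset_Icc_self ht) (Ioo_subset_Icc_self hs)
end

section
/- Let μ be C¹, increasing, concave on [0,∞) with μ(0)=0, β(σ,s) = μ(s)(σ-s), and γ(σ) = max_{s ∈ [0,σ]} β(σ,s) for σ > 0. Then γ is differentiable on (0,∞) with γ'(σ) = μ(ŝ(σ)), where ŝ(σ) is the unique maximizer of β(σ,·); in particular γ is strictly increasing. -/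
open Set Filter Topology

/-- Uniqueness of the maximizer of `s ↦ μ s * (σ - s)` on `[0, σ]`. -/
private lemma uniq_max (μ : ℝ → ℝ)
    (hmono : StrictMonoOn μ (Set.Ici 0))
    (hconc : ConcaveOn ℝ (Set.Ici 0) μ)
    (h0 : μ 0 = 0) {σ a b : ℝ}
    (ha : a ∈ Set.Ioo 0 σ)
    (hb : b ∈ Set.Icc 0 σ)
    (hma : IsMaxOn (fun s : ℝ => μ s * (σ - s)) (Set.Icc 0 σ) a)
    (hmb : IsMaxOn (fun s : ℝ => μ s * (σ - s)) (Set.Icc 0 σ) b) : b = a := by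
  have haI : a ∈ Set.Icc 0 σ := ⟨ha.1.le, ha.2.le⟩
  have hμa : 0 < μ a := h0 ▸ hmono (Set.mem_Ici.2 le_rfl) (Set.mem_Ici.2 ha.1.le) ha.1
  have feq : μ a * (σ - a) = μ b * (σ - b) :=
    le_antisymm ((isMaxOn_iff.1 hmb) a haI) ((isMaxOn_iff.1 hma) b hb)
  have hMpos : 0 < μ a * (σ - a) := mul_pos hμa (by linarith [ha.2])
  have hμb : 0 < μ b := by
    by_contra hc
    push_neg at hc
    nlinarith [hb.2]
  have hb0 : 0 < b := by
    rcases lt_or_eq_of_le hb.1 with h | h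
    · exact h
    · exfalso; rw [← h, h0] at hμb; linarith
  have hbσ : b < σ := by nlinarith
  -- general midpoint argument
  have key : ∀ x y : ℝ, x ∈ Set.Ioo 0 σ → y ∈ Set.Ioo 0 σ → x < y →
      μ x * (σ - x) = μ y * (σ - y) →
      (∀ s ∈ Set.Icc (0:ℝ) σ, μ s * (σ - s) ≤ μ x * (σ - x)) → False := by
    intro x y hx hy hxy hfeq hmax
    have hμxy : μ x < μ y := hmono (Set.mem_Ici.2 hx.1.le) (Set.mem_Ici.2 hy.1.le) hxy
    have hμx : 0 < μ x := h0 ▸ hmono (Set.mem_Ici.2 le_rfl) (Set.mem_Ici.2 hx.1.le) hx.1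
    have hm : (x + y) / 2 ∈ Set.Icc (0:ℝ) σ := ⟨by linarith [hx.1, hy.1], by linarith [hx.2, hy.2]⟩
    have hcm : (μ x + μ y) / 2 ≤ μ ((x + y) / 2) := by
      have := hconc.2 (Set.mem_Ici.2 hx.1.le) (Set.mem_Ici.2 hy.1.le)
        (by norm_num : (0:ℝ) ≤ 1/2) (by norm_num : (0:ℝ) ≤ 1/2) (by norm_num)
      simp only [smul_eq_mul] at this
      have harg : (1/2 : ℝ) * x + (1/2 : ℝ) * y = (x + y) / 2 := by ring
      rw [harg] at this
      linarith
    have hfm : μ ((x + y) / 2) * (σ - (x + y) / 2) ≤ μ x * (σ - x) := hmax _ hm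
    have hσm : 0 < σ - (x + y) / 2 := by linarith [hx.2, hy.2, hx.1]
    have h1 : (μ x + μ y) / 2 * (σ - (x + y) / 2) ≤ μ ((x + y) / 2) * (σ - (x + y) / 2) :=
      mul_le_mul_of_nonneg_right hcm hσm.le
    nlinarith [mul_pos (sub_pos.2 hμxy) (sub_pos.2 hxy)]
  rcases lt_trichotomy a b with h | h | h
  · exact (key a b ha ⟨hb0, hbσ⟩ h feq (isMaxOn_iff.1 hma)).elim
  · exact h.symm
  · exact (key b a ⟨hb0, hbσ⟩ ha h feq.symm (isMaxOn_iff.1 hmb)).elim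

/-- Continuity of the maximizer map at each `σ > 0`. -/
private lemma shat_tendsto (μ shat : ℝ → ℝ)
    (hC1 : ContDiff ℝ 1 μ)
    (hmono : StrictMonoOn μ (Set.Ici 0))
    (hconc : ConcaveOn ℝ (Set.Ici 0) μ)
    (h0 : μ 0 = 0)
    (hshat : ∀ σ > (0:ℝ), shat σ ∈ Set.Ioo 0 σ ∧
      IsMaxOn (fun s : ℝ => μ s * (σ - s)) (Set.Icc 0 σ) (shat σ))
    {σ : ℝ} (hσ : 0 < σ) :
    Filter.Tendsto shat (nhdsWithin σ (Set.Ioi 0)) (nhds (shat σ)) := by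
  have hμmono : ∀ x y : ℝ, 0 ≤ x → x ≤ y → μ x ≤ μ y := fun x y hx hxy =>
    hmono.monotoneOn (Set.mem_Ici.2 hx) (Set.mem_Ici.2 (hx.trans hxy)) hxy
  have hμnn : ∀ x : ℝ, 0 ≤ x → 0 ≤ μ x := fun x hx => h0 ▸ hμmono 0 x le_rfl hx
  obtain ⟨hsmem, hsmax⟩ := hshat σ hσ
  rw [Metric.tendsto_nhdsWithin_nhds]
  intro ε hε
  set ε' := min ε (shat σ) with hε'def
  have hε'pos : 0 < ε' := lt_min hε hsmem.1
  have hε'le : ε' ≤ shat σ := min_le_right _ _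
  set K := Set.Icc (0:ℝ) (σ + 1) \ Set.Ioo (shat σ - ε') (shat σ + ε') with hKdef
  have hKc : IsCompact K := isCompact_Icc.diff isOpen_Ioo
  have hKne : K.Nonempty := by
    refine ⟨0, ⟨le_rfl, by linarith⟩, ?_⟩
    simp only [Set.mem_Ioo, not_and]
    intro h; linarith
  have hfc : Continuous (fun s : ℝ => μ s * (σ - s)) :=
    hC1.continuous.mul (continuous_const.sub continuous_id)
  obtain ⟨s₀, hs₀K, hs₀max⟩ := hKc.exists_isMaxOn hKne hfc.continuousOn
  set M := μ (shat σ) * (σ - shat σ) with hMdef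
  have hMpos : 0 < M :=
    mul_pos (h0 ▸ hmono (Set.mem_Ici.2 le_rfl) (Set.mem_Ici.2 hsmem.1.le) hsmem.1)
      (by linarith [hsmem.2])
  -- the gap
  have hgap : μ s₀ * (σ - s₀) < M := by
    rcases le_or_gt s₀ σ with hle | hlt
    · have hs₀Icc : s₀ ∈ Set.Icc (0:ℝ) σ := ⟨hs₀K.1.1, hle⟩
      have hle2 : μ s₀ * (σ - s₀) ≤ M := (isMaxOn_iff.1 hsmax) s₀ hs₀Icc
      rcases lt_or_eq_of_le hle2 with h | h
      · exact h
      · exfalso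
        have hmax' : IsMaxOn (fun s : ℝ => μ s * (σ - s)) (Set.Icc 0 σ) s₀ := by
          rw [isMaxOn_iff]
          intro x hx
          calc μ x * (σ - x) ≤ M := (isMaxOn_iff.1 hsmax) x hx
            _ = μ s₀ * (σ - s₀) := h.symm
        have := uniq_max μ hmono hconc h0 hsmem hs₀Icc hsmax hmax'
        have h2 := hs₀K.2
        rw [this] at h2
        exact h2 ⟨by linarith, by linarith⟩
    · have : μ s₀ * (σ - s₀) ≤ 0 :=
        mul_nonpos_of_nonneg_of_nonpos (hμnn s₀ hs₀K.1.1) (by linarith)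
      linarith
  set g := M - μ s₀ * (σ - s₀) with hgdef
  have hgpos : 0 < g := by simp only [hgdef]; linarith
  set C := μ (σ + 1) with hCdef
  have hCpos : 0 < C := h0 ▸ hmono (Set.mem_Ici.2 le_rfl) (Set.mem_Ici.2 (by linarith)) (by linarith)
  set δ := min (min 1 (σ - shat σ)) (g / (4 * C)) with hδdef
  have hδpos : 0 < δ :=
    lt_min (lt_min one_pos (by linarith [hsmem.2])) (by positivity)
  refine ⟨δ, hδpos, ?_⟩
  intro τ hτ hdist
  rw [Real.dist_eq] at hdist ⊢
  have hτσ1 : τ - σ < δ := by cases abs_lt.1 hdist; linarith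
  have hτσ2 : σ - τ < δ := by cases abs_lt.1 hdist; linarith
  have hδ1 : δ ≤ 1 := le_trans (min_le_left _ _) (min_le_left _ _)
  have hδ2 : δ ≤ σ - shat σ := le_trans (min_le_left _ _) (min_le_right _ _)
  have hδ3 : δ ≤ g / (4 * C) := min_le_right _ _
  obtain ⟨htmem, htmax⟩ := hshat τ hτ
  -- shat τ ∈ Icc 0 (σ+1)
  have hsτub : shat τ ≤ σ + 1 := by linarith [htmem.2]
  have hsτnn : 0 ≤ shat τ := htmem.1.le
  have hμτC : μ (shat τ) ≤ C := hμmono _ _ hsτnn hsτub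
  have hμτnn : 0 ≤ μ (shat τ) := hμnn _ hsτnn
  have hμσC : μ (shat σ) ≤ C := hμmono _ _ hsmem.1.le (by linarith [hsmem.2])
  have hμσnn : 0 ≤ μ (shat σ) := hμnn _ hsmem.1.le
  -- shat σ ≤ τ
  have hsστ : shat σ < τ := by linarith
  by_contra hcon
  push_neg at hcon
  -- then shat τ ∈ K
  have hsτK : shat τ ∈ K := by
    refine ⟨⟨hsτnn, hsτub⟩, ?_⟩
    simp only [Set.mem_Ioo, not_and]
    intro h1 h2
    have : |shat τ - shat σ| < ε' := abs_sub_lt_iff.2 ⟨by linarith, by linarith⟩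
    exact absurd this (not_lt.2 (le_trans (le_trans (min_le_left _ _) (le_of_eq rfl)) hcon))
  have hKineq : μ (shat τ) * (σ - shat τ) ≤ M - g := by
    have := (isMaxOn_iff.1 hs₀max) (shat τ) hsτK
    simp only [hgdef]; linarith
  -- maximality of shat τ at τ against shat σ
  have hmaxineq : μ (shat σ) * (τ - shat σ) ≤ μ (shat τ) * (τ - shat τ) :=
    (isMaxOn_iff.1 htmax) (shat σ) ⟨hsmem.1.le, hsστ.le⟩
  -- linear bounds on the cross terms
  have hb1 : μ (shat τ) * (τ - σ) ≤ C * δ := by nlinarith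
  have hb2 : -(C * δ) ≤ μ (shat σ) * (τ - σ) := by nlinarith
  have e1 : μ (shat σ) * (τ - shat σ) = M + μ (shat σ) * (τ - σ) := by
    simp only [hMdef]; ring
  have e2 : μ (shat τ) * (τ - shat τ) = μ (shat τ) * (σ - shat τ) + μ (shat τ) * (τ - σ) := by
    ring
  have hfinal : g ≤ 2 * C * δ := by linarith
  have : 2 * C * δ ≤ 2 * C * (g / (4 * C)) :=
    mul_le_mul_of_nonneg_left hδ3 (by positivity)
  have heq2 : 2 * C * (g / (4 * C)) = g / 2 := by field_simp; ring
  linarith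

/-- With γ(σ) = max_{s∈[0,σ]} μ(s)(σ-s) attained at the unique maximizer ŝ(σ) ∈ (0,σ),
    γ is differentiable on (0,∞) with γ'(σ) = μ(ŝ(σ)), and γ is strictly increasing there. -/
theorem stmt2 (μ γ shat : ℝ → ℝ)
    (hC1 : ContDiff ℝ 1 μ)
    (hmono : StrictMonoOn μ (Set.Ici 0))
    (hconc : ConcaveOn ℝ (Set.Ici 0) μ)
    (h0 : μ 0 = 0)
    (hshat : ∀ σ > (0:ℝ), shat σ ∈ Set.Ioo 0 σ ∧
      IsMaxOn (fun s : ℝ => μ s * (σ - s)) (Set.Icc 0 σ) (shat σ))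
    (hγ : ∀ σ > (0:ℝ), IsGreatest ((fun s : ℝ => μ s * (σ - s)) '' Set.Icc 0 σ) (γ σ)) :
    (∀ σ > (0:ℝ), HasDerivAt γ (μ (shat σ)) σ) ∧ StrictMonoOn γ (Set.Ioi 0) := by
  have hμmono : ∀ x y : ℝ, 0 ≤ x → x ≤ y → μ x ≤ μ y := fun x y hx hxy =>
    hmono.monotoneOn (Set.mem_Ici.2 hx) (Set.mem_Ici.2 (hx.trans hxy)) hxy
  have hμnn : ∀ x : ℝ, 0 ≤ x → 0 ≤ μ x := fun x hx => h0 ▸ hμmono 0 x le_rfl hx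
  have hge : ∀ σ, 0 < σ → ∀ s ∈ Set.Icc (0:ℝ) σ, μ s * (σ - s) ≤ γ σ := fun σ hσ s hs =>
    (hγ σ hσ).2 (Set.mem_image_of_mem _ hs)
  have heq : ∀ σ, 0 < σ → γ σ = μ (shat σ) * (σ - shat σ) := by
    intro σ hσ
    obtain ⟨⟨s, hs, hsv⟩, _⟩ := hγ σ hσ
    obtain ⟨hmem, hmax⟩ := hshat σ hσ
    have h1 : γ σ ≤ μ (shat σ) * (σ - shat σ) := hsv ▸ (isMaxOn_iff.1 hmax) s hs
    exact le_antisymm h1 (hge σ hσ _ ⟨hmem.1.le, hmem.2.le⟩)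
  have hγnn : ∀ σ, 0 < σ → 0 ≤ γ σ := by
    intro σ hσ
    have := hge σ hσ 0 ⟨le_rfl, hσ.le⟩
    simpa [h0] using this
  -- key two-sided envelope bound
  have hbound : ∀ σ τ : ℝ, 0 < σ → 0 < τ → shat σ < τ →
      0 ≤ γ τ - γ σ - μ (shat σ) * (τ - σ) ∧
        γ τ - γ σ - μ (shat σ) * (τ - σ) ≤ (μ (shat τ) - μ (shat σ)) * (τ - σ) := by
    intro σ τ hσ hτ hsτ
    obtain ⟨hmemσ, hmaxσ⟩ := hshat σ hσ
    obtain ⟨hmemτ, hmaxτ⟩ := hshat τ hτ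
    have hγσ := heq σ hσ
    have hγτ := heq τ hτ
    constructor
    · have hlow : μ (shat σ) * (τ - shat σ) ≤ γ τ :=
        hge τ hτ _ ⟨hmemσ.1.le, hsτ.le⟩
      nlinarith
    · have hup : μ (shat τ) * (σ - shat τ) ≤ γ σ := by
        rcases le_or_gt (shat τ) σ with hle | hlt
        · exact hge σ hσ _ ⟨hmemτ.1.le, hle⟩
        · have : μ (shat τ) * (σ - shat τ) ≤ 0 :=
            mul_nonpos_of_nonneg_of_nonpos (hμnn _ hmemτ.1.le) (by linarith)
          linarith [hγnn σ hσ]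
      nlinarith
  constructor
  · intro σ hσ
    obtain ⟨hsmem, _⟩ := hshat σ hσ
    rw [hasDerivAt_iff_tendsto_slope]
    have hle : 𝓝[≠] σ ≤ 𝓝[Set.Ioi 0] σ :=
      nhdsWithin_le_iff.2 (mem_nhdsWithin_of_mem_nhds (Ioi_mem_nhds hσ))
    have hcont : Tendsto (fun τ => μ (shat τ)) (𝓝[≠] σ) (𝓝 (μ (shat σ))) :=
      ((hC1.continuous.tendsto _).comp
        (shat_tendsto μ shat hC1 hmono hconc h0 hshat hσ)).mono_left hle
    rw [tendsto_iff_dist_tendsto_zero]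
    have hg0 : Tendsto (fun τ => |μ (shat τ) - μ (shat σ)|) (𝓝[≠] σ) (𝓝 0) := by
      have := (hcont.sub (tendsto_const_nhds (x := μ (shat σ)))).abs
      simpa using this
    refine squeeze_zero' (Eventually.of_forall fun τ => dist_nonneg) ?_ hg0
    · have hmem : Set.Ioo (shat σ) (σ + 1) ∈ 𝓝[≠] σ :=
        mem_nhdsWithin_of_mem_nhds (Ioo_mem_nhds hsmem.2 (by linarith))
      filter_upwards [hmem, self_mem_nhdsWithin] with τ hτmem hτne
      have hτpos : 0 < τ := lt_trans hsmem.1 hτmem.1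
      have hτσ : τ - σ ≠ 0 := sub_ne_zero.2 hτne
      obtain ⟨hE0, hE1⟩ := hbound σ τ hσ hτpos hτmem.1
      rw [Real.dist_eq]
      have hslope : slope γ σ τ - μ (shat σ) =
          (γ τ - γ σ - μ (shat σ) * (τ - σ)) / (τ - σ) := by
        rw [slope_def_field]
        field_simp
      rw [hslope, abs_div, div_le_iff₀ (abs_pos.2 hτσ), abs_of_nonneg hE0]
      calc γ τ - γ σ - μ (shat σ) * (τ - σ)
          ≤ (μ (shat τ) - μ (shat σ)) * (τ - σ) := hE1
        _ ≤ |(μ (shat τ) - μ (shat σ)) * (τ - σ)| := le_abs_self _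
        _ = |μ (shat τ) - μ (shat σ)| * |τ - σ| := abs_mul _ _
  · intro σ₁ h₁ σ₂ h₂ h12
    rw [Set.mem_Ioi] at h₁ h₂
    obtain ⟨hmem₁, _⟩ := hshat σ₁ h₁
    have hμpos : 0 < μ (shat σ₁) :=
      h0 ▸ hmono (Set.mem_Ici.2 le_rfl) (Set.mem_Ici.2 hmem₁.1.le) hmem₁.1
    have h1 : γ σ₁ = μ (shat σ₁) * (σ₁ - shat σ₁) := heq σ₁ h₁
    have h2 : μ (shat σ₁) * (σ₂ - shat σ₁) ≤ γ σ₂ :=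
      hge σ₂ h₂ _ ⟨hmem₁.1.le, by linarith [hmem₁.2]⟩
    nlinarith
end

section
/- Along any admissible trajectory of the reduced dynamics, the weighted mean m(t) = r s₁(t) + (1-r) s₂(t) is nonincreasing; consequently m(t) ≤ m(0) for all t ≥ 0 and trajectories are bounded. -/
/-!
In `r ṡ₁ + (1 - r) ṡ₂` the exchange terms cancel, leaving `μ(s*) (s* - (α s₁ + (1 - α) s₂))`,
which is `≤ 0` because `0 ≤ s* ≤ α s₁ + (1 - α) s₂` and `μ(s*) ≥ μ(0) = 0`; hence the weighted
mean decreases. It bounds both coordinates once the trajectory is known to stay in the closed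
quadrant, and it does: when the smaller coordinate is negative, both the uptake term (as `s* ≥ 0`)
and the exchange term push it up. To make this rigorous we perturb to `sᵢ + ε (1 + t)`, whose
derivative is strictly positive at the first time the smaller coordinate reaches `0`.
-/

open Filter Set Topology

theorem HasDerivAt.nonpos_of_forall_Ico_le {f : ℝ → ℝ} {f' a b : ℝ} (hf : HasDerivAt f f' b)
    (hab : a < b) (hmin : ∀ x ∈ Ico a b, f b ≤ f x) : f' ≤ 0 := by
  have hslope : Tendsto (slope f b) (𝓝[<] b) (𝓝 f') :=
    (hasDerivAt_iff_tendsto_slope.1 hf).mono_left (nhdsLT_le_nhdsNE b)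
  refine le_of_tendsto hslope ?_
  filter_upwards [Ioo_mem_nhdsLT hab] with x hx
  rw [slope_def_field]
  exact div_nonpos_of_nonneg_of_nonpos (sub_nonneg.2 (hmin x ⟨hx.1.le, hx.2⟩)) (by linarith [hx.2])

theorem exists_first_nonpos_of_continuousOn {u : ℝ → ℝ} {a b : ℝ} (hu : ContinuousOn u (Icc a b))
    (hab : a ≤ b) (ha : 0 < u a) (hb : u b ≤ 0) :
    ∃ T ∈ Ioc a b, u T ≤ 0 ∧ ∀ x ∈ Ico a T, 0 < u x := by
  have hcompact : IsCompact (Icc a b ∩ u ⁻¹' Iic 0) :=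
    isCompact_Icc.of_isClosed_subset (hu.preimage_isClosed_of_isClosed isClosed_Icc isClosed_Iic)
      inter_subset_left
  obtain ⟨T, ⟨⟨haT, hTb⟩, hT⟩, hleast⟩ := hcompact.exists_isLeast ⟨b, ⟨hab, le_rfl⟩, hb⟩
  refine ⟨T, ⟨lt_of_le_of_ne haT ?_, hTb⟩, hT, fun x hx => ?_⟩
  · rintro rfl
    exact (not_le.2 ha) hT
  · by_contra! hx0
    exact (not_le.2 hx.2) (hleast ⟨⟨hx.1, hx.2.le.trans hTb⟩, hx0⟩)

theorem antitoneOn_Ici_of_hasDerivAt_nonpos {f f' : ℝ → ℝ} {a : ℝ}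
    (hf : ∀ t ≥ a, HasDerivAt f (f' t) t) (hf' : ∀ t ≥ a, f' t ≤ 0) : AntitoneOn f (Ici a) := by
  refine antitoneOn_of_hasDerivWithinAt_nonpos (f' := f') (convex_Ici a)
    (fun t ht => (hf t ht).continuousAt.continuousWithinAt) (fun t ht => ?_) (fun t ht => ?_)
  · rw [interior_Ici] at ht
    exact (hf t (le_of_lt ht)).hasDerivWithinAt
  · rw [interior_Ici] at ht
    exact hf' t (le_of_lt ht)

theorem pos_pair_of_deriv_pos_at_nonpos_min {f g f' g' : ℝ → ℝ} {a : ℝ}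
    (hf : ∀ t ≥ a, HasDerivAt f (f' t) t) (hg : ∀ t ≥ a, HasDerivAt g (g' t) t)
    (hfa : 0 < f a) (hga : 0 < g a)
    (hf' : ∀ t ≥ a, f t ≤ 0 → f t ≤ g t → 0 < f' t)
    (hg' : ∀ t ≥ a, g t ≤ 0 → g t ≤ f t → 0 < g' t) :
    ∀ t ≥ a, 0 < f t ∧ 0 < g t := by
  by_contra! ⟨t₀, ht₀, hbad⟩
  have hcont : ContinuousOn (fun t => min (f t) (g t)) (Icc a t₀) :=
    ContinuousOn.inf (fun t ht => (hf t ht.1).continuousAt.continuousWithinAt)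
      (fun t ht => (hg t ht.1).continuousAt.continuousWithinAt)
  have hmin : min (f t₀) (g t₀) ≤ 0 := by
    rcases le_or_gt (f t₀) 0 with h | h
    · exact min_le_of_left_le h
    · exact min_le_of_right_le (hbad h)
  obtain ⟨T, ⟨haT, -⟩, hT, hpos⟩ :=
    exists_first_nonpos_of_continuousOn hcont ht₀ (lt_min hfa hga) hmin
  rcases le_total (f T) (g T) with hfg | hgf
  · have hfT : f T ≤ 0 := by rwa [min_eq_left hfg] at hT
    refine (hf' T haT.le hfT hfg).not_ge ((hf T haT.le).nonpos_of_forall_Ico_le haT fun x hx => ?_)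
    exact hfT.trans (hpos x hx |>.trans_le (min_le_left _ _)).le
  · have hgT : g T ≤ 0 := by rwa [min_eq_right hgf] at hT
    refine (hg' T haT.le hgT hgf).not_ge ((hg T haT.le).nonpos_of_forall_Ico_le haT fun x hx => ?_)
    exact hgT.trans (hpos x hx |>.trans_le (min_le_right _ _)).le

theorem nonneg_pair_of_deriv_nonneg_at_neg_min {f g f' g' : ℝ → ℝ} {a : ℝ}
    (hf : ∀ t ≥ a, HasDerivAt f (f' t) t) (hg : ∀ t ≥ a, HasDerivAt g (g' t) t)
    (hfa : 0 ≤ f a) (hga : 0 ≤ g a)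
    (hf' : ∀ t ≥ a, f t < 0 → f t ≤ g t → 0 ≤ f' t)
    (hg' : ∀ t ≥ a, g t < 0 → g t ≤ f t → 0 ≤ g' t) :
    ∀ t ≥ a, 0 ≤ f t ∧ 0 ≤ g t := by
  have hperturbed : ∀ ε > 0, ∀ t ≥ a,
      0 < f t + ε * (1 + (t - a)) ∧ 0 < g t + ε * (1 + (t - a)) := by
    intro ε hε
    have hpos : ∀ t ≥ a, 0 < ε * (1 + (t - a)) := fun t ht => mul_pos hε (by linarith)
    have hlin : ∀ t, HasDerivAt (fun t => ε * (1 + (t - a))) ε t := fun t => by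
      simpa using ((hasDerivAt_id t).sub_const a |>.const_add 1).const_mul ε
    refine pos_pair_of_deriv_pos_at_nonpos_min (fun t ht => (hf t ht).add (hlin t))
      (fun t ht => (hg t ht).add (hlin t)) (by simpa using add_pos_of_nonneg_of_pos hfa hε)
      (by simpa using add_pos_of_nonneg_of_pos hga hε)
      (fun t ht hft hfg => ?_) (fun t ht hgt hgf => ?_)
    · have := hf' t ht (by linarith [hpos t ht]) (by linarith)
      linarith
    · have := hg' t ht (by linarith [hpos t ht]) (by linarith)
      linarith
  intro t ht
  have hc : 0 < 1 + (t - a) := by linarith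
  have key : ∀ δ > 0, 0 < f t + δ ∧ 0 < g t + δ := fun δ hδ => by
    simpa [div_mul_cancel₀ δ hc.ne'] using hperturbed (δ / (1 + (t - a))) (div_pos hδ hc) t ht
  exact ⟨le_of_forall_pos_lt_add fun δ hδ => (key δ hδ).1,
    le_of_forall_pos_lt_add fun δ hδ => (key δ hδ).2⟩

theorem hasDerivAt_weighted_mean {s₁ s₂ : ℝ → ℝ} {r d α ν σ t : ℝ} (hr₀ : r ≠ 0) (hr₁ : 1 - r ≠ 0)
    (h₁ : HasDerivAt s₁ (α / r * (ν * (σ - s₁ t)) + d / r * (s₂ t - s₁ t)) t)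
    (h₂ : HasDerivAt s₂
      ((1 - α) / (1 - r) * (ν * (σ - s₂ t)) + d / (1 - r) * (s₁ t - s₂ t)) t) :
    HasDerivAt (fun t => r * s₁ t + (1 - r) * s₂ t)
      (ν * (σ - (α * s₁ t + (1 - α) * s₂ t))) t := by
  refine ((h₁.const_mul r).add (h₂.const_mul (1 - r))).congr_deriv ?_
  field_simp
  ring

theorem compartment_rate_nonneg {α ρ ν σ d x y : ℝ} (hα : 0 ≤ α) (hρ : 0 ≤ ρ) (hν : 0 ≤ ν)
    (hd : 0 ≤ d) (hxσ : x ≤ σ) (hxy : x ≤ y) :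
    0 ≤ α / ρ * (ν * (σ - x)) + d / ρ * (y - x) :=
  add_nonneg (mul_nonneg (div_nonneg hα hρ) (mul_nonneg hν (sub_nonneg.2 hxσ)))
    (mul_nonneg (div_nonneg hd hρ) (sub_nonneg.2 hxy))

theorem le_div_of_weighted_mean_le {r x y m : ℝ} (hr : r ∈ Ioo (0 : ℝ) 1) (hx : 0 ≤ x)
    (hy : 0 ≤ y) (h : r * x + (1 - r) * y ≤ m) : x ≤ m / r ∧ y ≤ m / (1 - r) := by
  obtain ⟨hr₀, hr₁⟩ := hr
  constructor
  · rw [le_div_iff₀' hr₀]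
    linarith [mul_nonneg (sub_pos.2 hr₁).le hy]
  · rw [le_div_iff₀' (sub_pos.2 hr₁)]
    linarith [mul_nonneg hr₀.le hx]

/-- Along any admissible trajectory, m = r s₁ + (1-r) s₂ is nonincreasing, m(t) ≤ m(0),
    and trajectories are bounded. -/
theorem stmt5 (μ : ℝ → ℝ)
    (hmono : MonotoneOn μ (Set.Ici 0)) (h0 : μ 0 = 0)
    (r d : ℝ) (hr : r ∈ Set.Ioo (0:ℝ) 1) (hd : 0 ≤ d)
    (s₁ s₂ a sst : ℝ → ℝ)
    (ha : ∀ t ≥ (0:ℝ), a t ∈ Set.Icc (0:ℝ) 1)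
    (hsst : ∀ t ≥ (0:ℝ), sst t ∈ Set.Icc 0 (a t * s₁ t + (1 - a t) * s₂ t))
    (hode1 : ∀ t ≥ (0:ℝ), HasDerivAt s₁
      (a t / r * (μ (sst t) * (sst t - s₁ t)) + d / r * (s₂ t - s₁ t)) t)
    (hode2 : ∀ t ≥ (0:ℝ), HasDerivAt s₂
      ((1 - a t) / (1 - r) * (μ (sst t) * (sst t - s₂ t)) + d / (1 - r) * (s₁ t - s₂ t)) t)
    (hinit : 0 ≤ s₁ 0 ∧ 0 ≤ s₂ 0) :
    AntitoneOn (fun t => r * s₁ t + (1 - r) * s₂ t) (Set.Ici 0) ∧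
    (∀ t ≥ (0:ℝ), r * s₁ t + (1 - r) * s₂ t ≤ r * s₁ 0 + (1 - r) * s₂ 0) ∧
    ∃ M : ℝ, ∀ t ≥ (0:ℝ), |s₁ t| ≤ M ∧ |s₂ t| ≤ M := by
  have hr₀ : 0 < r := hr.1
  have hr₁ : 0 < 1 - r := sub_pos.2 hr.2
  have hμ : ∀ t ≥ (0:ℝ), 0 ≤ μ (sst t) := fun t ht =>
    h0 ▸ hmono self_mem_Ici (hsst t ht).1 (hsst t ht).1
  have hanti : AntitoneOn (fun t => r * s₁ t + (1 - r) * s₂ t) (Ici 0) :=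
    antitoneOn_Ici_of_hasDerivAt_nonpos
      (fun t ht => hasDerivAt_weighted_mean hr₀.ne' hr₁.ne' (hode1 t ht) (hode2 t ht))
      fun t ht => mul_nonpos_of_nonneg_of_nonpos (hμ t ht) (sub_nonpos.2 (hsst t ht).2)
  have hdecay : ∀ t ≥ (0:ℝ), r * s₁ t + (1 - r) * s₂ t ≤ r * s₁ 0 + (1 - r) * s₂ 0 :=
    fun t ht => hanti self_mem_Ici ht ht
  have hnonneg := nonneg_pair_of_deriv_nonneg_at_neg_min hode1 hode2 hinit.1 hinit.2
    (fun t ht h₁ h₁₂ => compartment_rate_nonneg (ha t ht).1 hr₀.le (hμ t ht) hd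
      (h₁.le.trans (hsst t ht).1) h₁₂)
    (fun t ht h₂ h₂₁ => compartment_rate_nonneg (sub_nonneg.2 (ha t ht).2) hr₁.le (hμ t ht) hd
      (h₂.le.trans (hsst t ht).1) h₂₁)
  refine ⟨hanti, hdecay, max ((r * s₁ 0 + (1 - r) * s₂ 0) / r)
    ((r * s₁ 0 + (1 - r) * s₂ 0) / (1 - r)), fun t ht => ?_⟩
  obtain ⟨h₁, h₂⟩ := hnonneg t ht
  obtain ⟨hb₁, hb₂⟩ := le_div_of_weighted_mean_le hr h₁ h₂ (hdecay t ht)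
  rw [abs_of_nonneg h₁, abs_of_nonneg h₂]
  exact ⟨hb₁.trans (le_max_left _ _), hb₂.trans (le_max_right _ _)⟩
end

section
/- Under the feedback α = r, s* = (r s₁ + (1-r) s₂)/2, the quantity m = r s₁ + (1-r) s₂ satisfies ṁ = -μ(m/2)·(m/2) < 0 for m > 0, and m(t) → 0 as t → ∞; hence the target {max(s₁,s₂) ≤ s̲} is reached in finite time from any initial condition in ℝ₊². -/
/-!
Summing the two equations with weights `r` and `1 - r` cancels the exchange terms, so the total
`m` obeys the autonomous equation `ṁ = -φ(m)` with `φ x = μ(x/2) · x/2`, strictly increasing on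
`[0, ∞)` and vanishing at `0`. Nonnegativity of `m` and of each `sᵢ` comes from an integrating
factor: each solves `ẏ = -b(t) y + f(t)` along the trajectory with `b` continuous and `f ≥ 0`.
Once `m ≥ 0`, it is nonincreasing and cannot stay above any `ε > 0`, since it would then decrease
at rate at least `φ(ε)`; hence `m → 0`. Finally `r s₁ ≤ m` and `(1 - r) s₂ ≤ m` bound both
components by `s̲` as soon as `m < min(r, 1 - r) s̲`.
-/

open Set Filter Topology Real

theorem nonneg_of_hasDerivAt_eq_neg_mul_add {b f y : ℝ → ℝ} (hb : ContinuousOn b (Ici 0))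
    (hf : ∀ t ≥ 0, 0 ≤ f t) (hy₀ : 0 ≤ y 0)
    (hy : ∀ t ≥ 0, HasDerivAt y (-b t * y t + f t) t) {t : ℝ} (ht : 0 ≤ t) : 0 ≤ y t := by
  -- `b` is only continuous on `[0, ∞)`; freezing it at `b 0` on the left keeps `B' = b` at `0`
  set B : ℝ → ℝ := fun u => ∫ x in (0 : ℝ)..u, b (max x 0)
  have hB : ∀ u ≥ 0, HasDerivAt B (b u) u := fun u hu => by
    have hcont : Continuous fun x => b (max x 0) :=
      hb.comp_continuous (continuous_id.max continuous_const) fun x => le_max_right x 0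
    simpa [max_eq_left hu] using (hcont.integral_hasStrictDerivAt 0 u).hasDerivAt
  have hmono : MonotoneOn (fun u => y u * exp (B u)) (Ici 0) := by
    refine monotoneOn_of_hasDerivWithinAt_nonneg (convex_Ici 0) (f' := fun u => f u * exp (B u))
      (fun u hu => ((hy u hu).continuousAt.mul (hB u hu).continuousAt.rexp).continuousWithinAt)
      (fun u hu => ?_) (fun u hu => ?_)
    · rw [interior_Ici] at hu
      exact (((hy u hu.le).mul (hB u hu.le).exp).congr_deriv (by ring)).hasDerivWithinAt
    · rw [interior_Ici] at hu
      exact mul_nonneg (hf u hu.le) (exp_pos _).le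
  have h := hmono self_mem_Ici ht ht
  simp only [B, intervalIntegral.integral_same, exp_zero, mul_one] at h
  exact (mul_nonneg_iff_of_pos_right (exp_pos _)).1 (hy₀.trans h)

theorem nonneg_of_hasDerivAt_relax {a p q s : ℝ → ℝ} {c : ℝ} (ha : ContinuousOn a (Ici 0))
    (ha₀ : ∀ t ≥ 0, 0 ≤ a t) (hp : ∀ t ≥ 0, 0 ≤ p t) (hq : ∀ t ≥ 0, 0 ≤ q t) (hc : 0 ≤ c)
    (hs₀ : 0 ≤ s 0) (hs : ∀ t ≥ 0, HasDerivAt s (a t * (p t - s t) + c * (q t - s t)) t) {t : ℝ}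
    (ht : 0 ≤ t) : 0 ≤ s t :=
  nonneg_of_hasDerivAt_eq_neg_mul_add (b := fun t => a t + c) (f := fun t => a t * p t + c * q t)
    (ha.add continuousOn_const)
    (fun t ht => add_nonneg (mul_nonneg (ha₀ t ht) (hp t ht)) (mul_nonneg hc (hq t ht)))
    hs₀ (fun t ht => (hs t ht).congr_deriv (by ring)) ht

theorem tendsto_zero_of_hasDerivAt_eq_neg {φ y : ℝ → ℝ} (hφ : StrictMonoOn φ (Ici 0))
    (hφ₀ : φ 0 = 0) (hy₀ : ∀ t ≥ 0, 0 ≤ y t) (hy : ∀ t ≥ 0, HasDerivAt y (-φ (y t)) t) :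
    Tendsto y atTop (𝓝 0) := by
  have hcont : ContinuousOn y (Ici 0) := fun t ht => (hy t ht).continuousAt.continuousWithinAt
  have hderiv : ∀ t ∈ interior (Ici (0 : ℝ)), HasDerivWithinAt y (-φ (y t)) (interior (Ici 0)) t :=
    fun t ht => (hy t (interior_subset ht)).hasDerivWithinAt
  have hφ_mono : ∀ ⦃a b⦄, 0 ≤ a → a ≤ b → φ a ≤ φ b :=
    fun a b ha hab => hφ.monotoneOn ha (ha.trans hab) hab
  have hanti : AntitoneOn y (Ici 0) :=
    antitoneOn_of_hasDerivWithinAt_nonpos (convex_Ici 0) hcont hderiv fun t ht =>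
      neg_nonpos.2 (hφ₀ ▸ hφ_mono le_rfl (hy₀ t (interior_subset ht)))
  have hbelow : ∀ ε > 0, ∃ T ≥ 0, y T < ε := by
    intro ε hε
    by_contra! h
    have hc : 0 < φ ε := hφ₀ ▸ hφ self_mem_Ici hε.le hε
    have hdecay : AntitoneOn (fun t => y t + φ ε * t) (Ici 0) :=
      antitoneOn_of_hasDerivWithinAt_nonpos (convex_Ici 0)
        (hcont.add (continuous_const_mul _).continuousOn)
        (fun t ht => (hderiv t ht).add ((hasDerivAt_id t).const_mul (φ ε)).hasDerivWithinAt)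
        fun t ht => by linarith [hφ_mono hε.le (h t (interior_subset ht))]
    set T := y 0 / φ ε + 1
    have hT : 0 ≤ T := by have := hy₀ 0 le_rfl; positivity
    have := hdecay self_mem_Ici hT hT
    have hφT : φ ε * T = y 0 + φ ε := by simp only [T]; field_simp [hc.ne']
    linarith [h T hT]
  refine tendsto_order.2 ⟨fun a ha => ?_, fun a ha => ?_⟩
  · filter_upwards [eventually_ge_atTop 0] with t ht using ha.trans_le (hy₀ t ht)
  · obtain ⟨T, hT, hyT⟩ := hbelow a ha
    filter_upwards [eventually_ge_atTop T] with t ht using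
      (hanti hT (hT.trans ht) ht).trans_lt hyT

theorem strictMonoOn_map_half_mul_half {μ : ℝ → ℝ} (hμ : StrictMonoOn μ (Ici 0)) (hμ₀ : μ 0 = 0) :
    StrictMonoOn (fun x => μ (x / 2) * (x / 2)) (Ici 0) := by
  intro a ha b hb hab
  simp only [mem_Ici] at ha hb
  have ha' : a / 2 ∈ Ici 0 := by simp only [mem_Ici]; positivity
  have hb' : b / 2 ∈ Ici 0 := by simp only [mem_Ici]; positivity
  have hμa : 0 ≤ μ (a / 2) := hμ₀ ▸ hμ.monotoneOn self_mem_Ici ha' ha'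
  exact mul_lt_mul'' (hμ ha' hb' (by linarith)) (by linarith) hμa (by positivity)

theorem stmt6_general (μ : ℝ → ℝ)
    (hC1 : ContDiff ℝ 1 μ)
    (hmono : StrictMonoOn μ (Set.Ici 0))
    (h0 : μ 0 = 0)
    (r d sb : ℝ) (hr : r ∈ Set.Ioo (0:ℝ) 1) (hd : 0 ≤ d) (hsb : 0 < sb)
    (s₁ s₂ m : ℝ → ℝ)
    (hm : ∀ t, m t = r * s₁ t + (1 - r) * s₂ t)
    (hinit : 0 ≤ s₁ 0 ∧ 0 ≤ s₂ 0)
    (hode1 : ∀ t ≥ (0:ℝ), HasDerivAt s₁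
      (μ (m t / 2) * (m t / 2 - s₁ t) + d / r * (s₂ t - s₁ t)) t)
    (hode2 : ∀ t ≥ (0:ℝ), HasDerivAt s₂
      (μ (m t / 2) * (m t / 2 - s₂ t) + d / (1 - r) * (s₁ t - s₂ t)) t) :
    (∀ t ≥ (0:ℝ), HasDerivAt m (-(μ (m t / 2) * (m t / 2))) t) ∧
    (∀ t ≥ (0:ℝ), 0 < m t → -(μ (m t / 2) * (m t / 2)) < 0) ∧
    Filter.Tendsto m Filter.atTop (nhds 0) ∧
    ∃ tf ≥ (0:ℝ), max (s₁ tf) (s₂ tf) ≤ sb := by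
  obtain ⟨hr₀, hr₁⟩ := hr
  have h1r : 0 < 1 - r := by linarith
  have hφ := strictMonoOn_map_half_mul_half hmono h0
  have hm' : ∀ t ≥ (0:ℝ), HasDerivAt m (-(μ (m t / 2) * (m t / 2))) t := fun t ht => by
    refine ((((hode1 t ht).const_mul r).add ((hode2 t ht).const_mul (1 - r))).congr_of_eventuallyEq
      (.of_forall hm)).congr_deriv ?_
    rw [hm t]; field_simp; ring
  have ha : ContinuousOn (fun t => μ (m t / 2)) (Ici 0) := hC1.continuous.comp_continuousOn
    fun t ht => ((hm' t ht).continuousAt.div_const 2).continuousWithinAt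
  have hm_nonneg : ∀ t ≥ (0:ℝ), 0 ≤ m t := fun t ht =>
    nonneg_of_hasDerivAt_eq_neg_mul_add (ha.div_const 2) (fun _ _ => le_rfl)
      (by rw [hm 0]; nlinarith [hinit.1, hinit.2]) (fun t ht => (hm' t ht).congr_deriv (by ring)) ht
  have htend := tendsto_zero_of_hasDerivAt_eq_neg hφ (by simp [h0]) hm_nonneg hm'
  have hhalf : ∀ t ≥ (0:ℝ), 0 ≤ m t / 2 := fun t ht => by linarith [hm_nonneg t ht]
  have hrate : ∀ t ≥ (0:ℝ), 0 ≤ μ (m t / 2) := fun t ht =>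
    h0 ▸ hmono.monotoneOn self_mem_Ici (hhalf t ht) (hhalf t ht)
  have hε : 0 < min r (1 - r) * sb := by positivity
  obtain ⟨T, hmT, hT⟩ := ((htend.eventually (gt_mem_nhds hε)).and (eventually_ge_atTop 0)).exists
  -- `m - s₁ = (1 - r) (s₂ - s₁)` and `m - s₂ = r (s₁ - s₂)`: the exchange pulls each `sᵢ` to `m`
  have hs₁ : 0 ≤ s₁ T := nonneg_of_hasDerivAt_relax (c := d / (r * (1 - r))) ha hrate hhalf
    hm_nonneg (by positivity) hinit.1
    (fun t ht => (hode1 t ht).congr_deriv (by rw [hm t]; field_simp; ring)) hT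
  have hs₂ : 0 ≤ s₂ T := nonneg_of_hasDerivAt_relax (c := d / (r * (1 - r))) ha hrate hhalf
    hm_nonneg (by positivity) hinit.2
    (fun t ht => (hode2 t ht).congr_deriv (by rw [hm t]; field_simp; ring)) hT
  refine ⟨hm', fun t _ hmt => neg_neg_of_pos ?_, htend, T, hT, max_le ?_ ?_⟩
  · simpa [h0] using hφ self_mem_Ici hmt.le hmt
  · nlinarith [hm T, min_le_left r (1 - r)]
  · nlinarith [hm T, min_le_right r (1 - r)]

/-- Under the feedback α = r, s* = m/2 with m = r s₁+(1-r)s₂, one has ṁ = -μ(m/2)(m/2) < 0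
    for m > 0, m(t) → 0, and the target {max(s₁,s₂) ≤ s̲} is reached in finite time. -/
theorem stmt6 (μ : ℝ → ℝ)
    (hC1 : ContDiff ℝ 1 μ)
    (hmono : StrictMonoOn μ (Set.Ici 0))
    (hconc : ConcaveOn ℝ (Set.Ici 0) μ)
    (h0 : μ 0 = 0)
    (r d sb : ℝ) (hr : r ∈ Set.Ioo (0:ℝ) 1) (hd : 0 ≤ d) (hsb : 0 < sb)
    (s₁ s₂ m : ℝ → ℝ)
    (hm : ∀ t, m t = r * s₁ t + (1 - r) * s₂ t)
    (hinit : 0 ≤ s₁ 0 ∧ 0 ≤ s₂ 0)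
    (hode1 : ∀ t ≥ (0:ℝ), HasDerivAt s₁
      (μ (m t / 2) * (m t / 2 - s₁ t) + d / r * (s₂ t - s₁ t)) t)
    (hode2 : ∀ t ≥ (0:ℝ), HasDerivAt s₂
      (μ (m t / 2) * (m t / 2 - s₂ t) + d / (1 - r) * (s₁ t - s₂ t)) t) :
    (∀ t ≥ (0:ℝ), HasDerivAt m (-(μ (m t / 2) * (m t / 2))) t) ∧
    (∀ t ≥ (0:ℝ), 0 < m t → -(μ (m t / 2) * (m t / 2)) < 0) ∧
    Filter.Tendsto m Filter.atTop (nhds 0) ∧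
    ∃ tf ≥ (0:ℝ), max (s₁ tf) (s₂ tf) ≤ sb :=
  stmt6_general μ hC1 hmono h0 r d sb hr hd hsb s₁ s₂ m hm hinit hode1 hode2
end

section
/- Fix s = (s₁,s₂) ∈ ℝ₊² with s₁, s₂ > 0 and λ = (λ₁,λ₂) with λ₁ < 0, λ₂ < 0, and r ∈ (0,1). Define Q(α, s*) = -(α λ₁/r · β(s₁,s*) + (1-α) λ₂/(1-r) · β(s₂,s*)) over the set U(s) = {(α,s*) : α ∈ [0,1], s* ∈ [0, αs₁+(1-α)s₂]}, and η = (-λ₁/r)γ(s₁) - (-λ₂/(1-r))γ(s₂). If η > 0, the unique maximizer of Q on U(s) is (α,s*) = (1, ŝ(s₁)); if η < 0, the unique maximizer is (0, ŝ(s₂)). -/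
lemma betamax (μ : ℝ → ℝ)
    (hmono : StrictMonoOn μ (Set.Ici 0))
    (hconc : ConcaveOn ℝ (Set.Ici 0) μ)
    (h0 : μ 0 = 0) (σ ss : ℝ) (hσ : 0 < σ) (h1 : ss ∈ Set.Ioo 0 σ)
    (hmax : IsMaxOn (fun s : ℝ => μ s * (σ - s)) (Set.Icc 0 σ) ss) :
    (∀ t, 0 ≤ t → μ t * (σ - t) ≤ μ ss * (σ - ss)) ∧
    (∀ t, 0 ≤ t → t ≠ ss → μ t * (σ - t) < μ ss * (σ - ss)) := by
  have hμpos : ∀ x : ℝ, 0 < x → 0 < μ x := by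
    intro x hx
    have := hmono (Set.self_mem_Ici) (Set.mem_Ici.mpr hx.le) hx
    simpa [h0] using this
  have ha' : 0 < μ ss := hμpos _ h1.1
  have hb' : 0 < σ - ss := sub_pos.mpr h1.2
  have hγpos : 0 < μ ss * (σ - ss) := mul_pos ha' hb'
  have weak : ∀ t, 0 ≤ t → μ t * (σ - t) ≤ μ ss * (σ - ss) := by
    intro t ht
    by_cases htσ : t ≤ σ
    · simpa using hmax (Set.mem_Icc.mpr ⟨ht, htσ⟩)
    · push_neg at htσ
      have hμt : 0 < μ t := hμpos t (hσ.trans htσ)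
      nlinarith
  refine ⟨weak, ?_⟩
  intro t ht hne
  rcases lt_or_ge σ t with htσ | htσ
  · have hμt : 0 < μ t := hμpos t (hσ.trans htσ)
    nlinarith
  · by_contra hcon
    push_neg at hcon
    have heq : μ t * (σ - t) = μ ss * (σ - ss) := le_antisymm (weak t ht) hcon
    rcases eq_or_lt_of_le ht with h0t | h0t
    · rw [← h0t] at heq; simp only [h0, zero_mul] at heq; linarith
    rcases eq_or_lt_of_le htσ with htσ' | htσ'
    · rw [htσ'] at heq; simp only [sub_self, mul_zero] at heq; linarith
    set a := μ t with hadef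
    set b := σ - t with hbdef
    have ha : 0 < a := hμpos t h0t
    have hb : 0 < b := sub_pos.mpr htσ'
    -- uniqueness via strict midpoint argument
    set m := (t + ss)/2 with hmdef
    have hm0 : 0 < m := by simp [hmdef]; linarith [h1.1]
    have hmσ : m < σ := by simp [hmdef]; linarith [h1.2]
    have hσm : σ - m = (b + (σ - ss))/2 := by simp [hmdef, hbdef]; ring
    have hconcm : (1/2 : ℝ) * μ t + (1/2 : ℝ) * μ ss ≤ μ m := by
      have := hconc.2 (Set.mem_Ici.mpr ht) (Set.mem_Ici.mpr h1.1.le)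
        (by norm_num : (0:ℝ) ≤ 1/2) (by norm_num : (0:ℝ) ≤ 1/2) (by norm_num)
      have hmm : (1/2 : ℝ) • t + (1/2 : ℝ) • ss = m := by
        simp [hmdef, smul_eq_mul]; ring
      rw [hmm] at this
      simpa [smul_eq_mul] using this
    have hmaxm : μ m * (σ - m) ≤ μ ss * (σ - ss) := by
      simpa using hmax (Set.mem_Icc.mpr ⟨hm0.le, hmσ.le⟩)
    have hneab : a * (σ - ss) ≠ μ ss * b := by
      intro hc
      apply hne
      have h2 : a ^ 2 * (b * (σ - ss)) = μ ss ^ 2 * (b * (σ - ss)) := by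
        linear_combination (a * (σ - ss)) * heq + (μ ss * (σ - ss)) * hc
      have h3 : a ^ 2 = μ ss ^ 2 := by
        have hbb : b * (σ - ss) ≠ 0 := by positivity
        exact mul_right_cancel₀ hbb h2
      have ha2 : a = μ ss := by nlinarith
      have hb2 : b = σ - ss := by
        have : a * b = a * (σ - ss) := by rw [heq, ha2]
        exact mul_left_cancel₀ ha.ne' this
      have : σ - t = σ - ss := hb2
      linarith
    have hsq : 0 < (a * (σ - ss) - μ ss * b) ^ 2 := by
      have := sub_ne_zero.mpr hneab
      positivity
    rw [hσm] at hmaxm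
    rw [show μ t = a from rfl] at hconcm
    have hhalf : (0:ℝ) ≤ (b + (σ - ss))/2 := by positivity
    have key : a * (σ - ss) + μ ss * b ≤ 2 * (μ ss * (σ - ss)) := by
      nlinarith [hmaxm, mul_le_mul_of_nonneg_right hconcm hhalf, heq]
    have hPpos : 0 < a * (σ - ss) + μ ss * b := by positivity
    have hg2 : a * b * (μ ss * (σ - ss)) = (μ ss * (σ - ss))^2 := by rw [heq]; ring
    nlinarith [key, hsq, hγpos, hPpos, hg2]

/-- Maximization of Q over U(s): if η > 0 the unique maximizer is (1, ŝ(s₁));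
    if η < 0 the unique maximizer is (0, ŝ(s₂)). -/
theorem stmt8 (μ shat γ : ℝ → ℝ)
    (hC1 : ContDiff ℝ 1 μ)
    (hmono : StrictMonoOn μ (Set.Ici 0))
    (hconc : ConcaveOn ℝ (Set.Ici 0) μ)
    (h0 : μ 0 = 0)
    (hshat : ∀ σ > (0:ℝ), shat σ ∈ Set.Ioo 0 σ ∧
      IsMaxOn (fun s : ℝ => μ s * (σ - s)) (Set.Icc 0 σ) (shat σ))
    (hγ : ∀ σ, γ σ = μ (shat σ) * (σ - shat σ))
    (s₁ s₂ l₁ l₂ r : ℝ) (hs₁ : 0 < s₁) (hs₂ : 0 < s₂)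
    (hl₁ : l₁ < 0) (hl₂ : l₂ < 0) (hr : r ∈ Set.Ioo (0:ℝ) 1)
    (Q : ℝ → ℝ → ℝ)
    (hQ : ∀ a sst, Q a sst = -(a * l₁ / r * (μ sst * (s₁ - sst)) +
      (1 - a) * l₂ / (1 - r) * (μ sst * (s₂ - sst))))
    (η : ℝ) (hη : η = (-l₁ / r) * γ s₁ - (-l₂ / (1 - r)) * γ s₂) :
    (0 < η → ∀ a ∈ Set.Icc (0:ℝ) 1, ∀ sst ∈ Set.Icc (0:ℝ) (a * s₁ + (1 - a) * s₂),
      (a, sst) ≠ (1, shat s₁) → Q a sst < Q 1 (shat s₁)) ∧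
    (η < 0 → ∀ a ∈ Set.Icc (0:ℝ) 1, ∀ sst ∈ Set.Icc (0:ℝ) (a * s₁ + (1 - a) * s₂),
      (a, sst) ≠ (0, shat s₂) → Q a sst < Q 0 (shat s₂)) := by
  obtain ⟨hm1, hmax1⟩ := hshat s₁ hs₁
  obtain ⟨hm2, hmax2⟩ := hshat s₂ hs₂
  obtain ⟨B1w, B1s⟩ := betamax μ hmono hconc h0 s₁ (shat s₁) hs₁ hm1 hmax1
  obtain ⟨B2w, B2s⟩ := betamax μ hmono hconc h0 s₂ (shat s₂) hs₂ hm2 hmax2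
  have hr0 : 0 < r := hr.1
  have hr1 : 0 < 1 - r := by have := hr.2; linarith
  have hc₁ : 0 < -l₁ / r := div_pos (by linarith) hr0
  have hc₂ : 0 < -l₂ / (1 - r) := div_pos (by linarith) hr1
  have hγ1 : γ s₁ = μ (shat s₁) * (s₁ - shat s₁) := hγ s₁
  have hγ2 : γ s₂ = μ (shat s₂) * (s₂ - shat s₂) := hγ s₂
  constructor
  · intro hη0 a ha sst hsst hne
    obtain ⟨ha0, ha1⟩ := ha
    obtain ⟨h0s, _⟩ := hsst
    have hQ1 : Q 1 (shat s₁) = (-l₁ / r) * (μ (shat s₁) * (s₁ - shat s₁)) := by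
      rw [hQ]; ring
    rcases eq_or_lt_of_le ha1 with heqa | hlta
    · subst heqa
      have hsne : sst ≠ shat s₁ := by
        intro h; exact hne (by rw [h])
      have hstrict := B1s sst h0s hsne
      rw [hQ, hQ1]
      have hE : -(1 * l₁ / r * (μ sst * (s₁ - sst)) +
          (1 - 1) * l₂ / (1 - r) * (μ sst * (s₂ - sst))) =
          -l₁ / r * (μ sst * (s₁ - sst)) := by ring
      rw [hE]
      exact mul_lt_mul_of_pos_left hstrict hc₁
    · have hb1 := B1w sst h0s
      have hb2 := B2w sst h0s
      rw [hQ, hQ1]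
      rw [hγ1, hγ2] at hη
      have t1 : a * ((-l₁ / r) * (μ sst * (s₁ - sst))) ≤
          a * ((-l₁ / r) * (μ (shat s₁) * (s₁ - shat s₁))) := by
        apply mul_le_mul_of_nonneg_left _ ha0
        exact mul_le_mul_of_nonneg_left hb1 hc₁.le
      have t2 : (1 - a) * ((-l₂ / (1 - r)) * (μ sst * (s₂ - sst))) ≤
          (1 - a) * ((-l₂ / (1 - r)) * (μ (shat s₂) * (s₂ - shat s₂))) := by
        apply mul_le_mul_of_nonneg_left _ (by linarith)
        exact mul_le_mul_of_nonneg_left hb2 hc₂.le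
      have t3 : 0 < (1 - a) * η := mul_pos (by linarith) hη0
      rw [hη] at t3
      have hexp : -(a * l₁ / r * (μ sst * (s₁ - sst)) +
          (1 - a) * l₂ / (1 - r) * (μ sst * (s₂ - sst))) =
          a * ((-l₁ / r) * (μ sst * (s₁ - sst))) +
          (1 - a) * ((-l₂ / (1 - r)) * (μ sst * (s₂ - sst))) := by ring
      rw [hexp]
      linarith [t1, t2, t3]
  · intro hη0 a ha sst hsst hne
    obtain ⟨ha0, ha1⟩ := ha
    obtain ⟨h0s, _⟩ := hsst
    have hQ1 : Q 0 (shat s₂) = (-l₂ / (1 - r)) * (μ (shat s₂) * (s₂ - shat s₂)) := by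
      rw [hQ]; ring
    rcases eq_or_lt_of_le ha0 with heqa | hlta
    · rw [← heqa] at hne ⊢
      have hsne : sst ≠ shat s₂ := by
        intro h; exact hne (by rw [h])
      have hstrict := B2s sst h0s hsne
      rw [hQ, hQ1]
      have hE : -(0 * l₁ / r * (μ sst * (s₁ - sst)) +
          (1 - 0) * l₂ / (1 - r) * (μ sst * (s₂ - sst))) =
          -l₂ / (1 - r) * (μ sst * (s₂ - sst)) := by ring
      rw [hE]
      exact mul_lt_mul_of_pos_left hstrict hc₂
    · have hb1 := B1w sst h0s
      have hb2 := B2w sst h0s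
      rw [hQ, hQ1]
      rw [hγ1, hγ2] at hη
      have t1 : a * ((-l₁ / r) * (μ sst * (s₁ - sst))) ≤
          a * ((-l₁ / r) * (μ (shat s₁) * (s₁ - shat s₁))) := by
        apply mul_le_mul_of_nonneg_left _ ha0
        exact mul_le_mul_of_nonneg_left hb1 hc₁.le
      have t2 : (1 - a) * ((-l₂ / (1 - r)) * (μ sst * (s₂ - sst))) ≤
          (1 - a) * ((-l₂ / (1 - r)) * (μ (shat s₂) * (s₂ - shat s₂))) := by
        apply mul_le_mul_of_nonneg_left _ (by linarith)
        exact mul_le_mul_of_nonneg_left hb2 hc₂.le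
      have t3 : 0 < a * (-η) := mul_pos hlta (by linarith)
      rw [hη] at t3
      have hexp : -(a * l₁ / r * (μ sst * (s₁ - sst)) +
          (1 - a) * l₂ / (1 - r) * (μ sst * (s₂ - sst))) =
          a * ((-l₁ / r) * (μ sst * (s₁ - sst))) +
          (1 - a) * ((-l₂ / (1 - r)) * (μ sst * (s₂ - sst))) := by ring
      rw [hexp]
      linarith [t1, t2, t3]
end

section
/- Along any extremal of the relaxed problem, the switching function η = (-λ₁/r)γ(s₁) - (-λ₂/(1-r))γ(s₂) satisfies, at almost every time, η̇ = d(γ(s₁)/r + γ(s₂)/(1-r))(λ₂/(1-r) - λ₁/r) + d(λ₁ μ(ŝ(s₁))/r² + λ₂ μ(ŝ(s₂))/(1-r)²)(s₁ - s₂). -/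
open MeasureTheory

set_option maxRecDepth 40000
set_option maxHeartbeats 2000000

/-- Along any extremal of the relaxed problem, the switching function
    η = (-λ₁/r)γ(s₁) - (-λ₂/(1-r))γ(s₂) satisfies, at almost every time, the formula
    η̇ = d(γ(s₁)/r + γ(s₂)/(1-r))(λ₂/(1-r) - λ₁/r)
        + d(λ₁ μ(ŝ(s₁))/r² + λ₂ μ(ŝ(s₂))/(1-r)²)(s₁ - s₂). -/
theorem stmt10 (μ γ shat : ℝ → ℝ) (r d : ℝ)
    (hr : r ∈ Set.Ioo (0:ℝ) 1) (hd : 0 < d)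
    (hγd : ∀ σ > (0:ℝ), HasDerivAt γ (μ (shat σ)) σ)
    (s₁ s₂ l₁ l₂ p αa αb sa sb : ℝ → ℝ)
    (hpos : ∀ t, 0 < s₁ t ∧ 0 < s₂ t)
    -- convexified state dynamics
    (hode1 : ∀ t, HasDerivAt s₁
      (-(1 / r) * (p t * αa t * (μ (sa t) * (s₁ t - sa t)) +
         (1 - p t) * αb t * (μ (sb t) * (s₁ t - sb t))) + d / r * (s₂ t - s₁ t)) t)
    (hode2 : ∀ t, HasDerivAt s₂
      (-(1 / (1 - r)) * (p t * (1 - αa t) * (μ (sa t) * (s₂ t - sa t)) +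
         (1 - p t) * (1 - αb t) * (μ (sb t) * (s₂ t - sb t))) + d / (1 - r) * (s₁ t - s₂ t)) t)
    -- adjoint dynamics
    (hadj1 : ∀ t, HasDerivAt l₁
      (l₁ t * (p t * αa t * μ (sa t) / r + (1 - p t) * αb t * μ (sb t) / r + d / r) -
        l₂ t * (d / (1 - r))) t)
    (hadj2 : ∀ t, HasDerivAt l₂
      (-(l₁ t) * (d / r) + l₂ t * (p t * (1 - αa t) * μ (sa t) / (1 - r) +
        (1 - p t) * (1 - αb t) * μ (sb t) / (1 - r) + d / (1 - r))) t)
    -- the correction terms δ₁, δ₂ vanish a.e. along optimal relaxed controls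
    (hδ₁ : ∀ᵐ t ∂volume,
      p t * αa t * (μ (sa t) * γ (s₁ t) - μ (shat (s₁ t)) * (μ (sa t) * (s₁ t - sa t))) +
      (1 - p t) * αb t * (μ (sb t) * γ (s₁ t) - μ (shat (s₁ t)) * (μ (sb t) * (s₁ t - sb t))) = 0)
    (hδ₂ : ∀ᵐ t ∂volume,
      p t * (1 - αa t) * (μ (sa t) * γ (s₂ t) - μ (shat (s₂ t)) * (μ (sa t) * (s₂ t - sa t))) +
      (1 - p t) * (1 - αb t) * (μ (sb t) * γ (s₂ t) - μ (shat (s₂ t)) * (μ (sb t) * (s₂ t - sb t))) = 0) :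
    ∀ᵐ t ∂volume, HasDerivAt
      (fun t => (-(l₁ t) / r) * γ (s₁ t) - (-(l₂ t) / (1 - r)) * γ (s₂ t))
      (d * (γ (s₁ t) / r + γ (s₂ t) / (1 - r)) * (l₂ t / (1 - r) - l₁ t / r) +
        d * (l₁ t * μ (shat (s₁ t)) / r ^ 2 + l₂ t * μ (shat (s₂ t)) / (1 - r) ^ 2) *
          (s₁ t - s₂ t)) t := by
  filter_upwards [hδ₁, hδ₂] with t h1 h2
  have hr0 : r ≠ 0 := ne_of_gt hr.1
  have hr1 : (1:ℝ) - r ≠ 0 := sub_ne_zero.mpr (ne_of_gt hr.2)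
  have hg1 := (hγd (s₁ t) (hpos t).1).comp t (hode1 t)
  have hg2 := (hγd (s₂ t) (hpos t).2).comp t (hode2 t)
  have H : HasDerivAt
      (fun t => (-(l₁ t) / r) * γ (s₁ t) - (-(l₂ t) / (1 - r)) * γ (s₂ t))
      ((-(l₁ t * (p t * αa t * μ (sa t) / r + (1 - p t) * αb t * μ (sb t) / r + d / r) -
          l₂ t * (d / (1 - r))) / r) * γ (s₁ t) +
        (-(l₁ t) / r) * (μ (shat (s₁ t)) *
          (-(1 / r) * (p t * αa t * (μ (sa t) * (s₁ t - sa t)) +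
            (1 - p t) * αb t * (μ (sb t) * (s₁ t - sb t))) + d / r * (s₂ t - s₁ t))) -
        ((-(-(l₁ t) * (d / r) + l₂ t * (p t * (1 - αa t) * μ (sa t) / (1 - r) +
            (1 - p t) * (1 - αb t) * μ (sb t) / (1 - r) + d / (1 - r))) / (1 - r)) * γ (s₂ t) +
          (-(l₂ t) / (1 - r)) * (μ (shat (s₂ t)) *
            (-(1 / (1 - r)) * (p t * (1 - αa t) * (μ (sa t) * (s₂ t - sa t)) +
              (1 - p t) * (1 - αb t) * (μ (sb t) * (s₂ t - sb t))) +
              d / (1 - r) * (s₁ t - s₂ t))))) t :=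
    (((hadj1 t).neg.div_const r).mul hg1).sub (((hadj2 t).neg.div_const (1 - r)).mul hg2)
  convert H using 1
  generalize 1 - r = c at *
  linear_combination (l₁ t / r ^ 2) * h1 - (l₂ t / c ^ 2) * h2
end

section
/- Along an extremal with d > 0, λ₁ < 0, λ₂ < 0: if s₁ > s₂ and η = 0 then η̇ < 0, and if s₁ < s₂ and η = 0 then η̇ > 0. Consequently, the set of times at which η = 0 and s₁ ≠ s₂ has Lebesgue measure zero. -/
open MeasureTheory Filter Topology

/-- Sign of η̇ on the switching locus: with d > 0 and λ₁, λ₂ < 0, if s₁ > s₂ and η = 0 then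
    η̇ < 0; if s₁ < s₂ and η = 0 then η̇ > 0. Consequently the set of times where η = 0 and
    s₁ ≠ s₂ is Lebesgue-null. -/
theorem stmt11 (μ γ shat : ℝ → ℝ) (r d : ℝ)
    (hr : r ∈ Set.Ioo (0:ℝ) 1) (hd : 0 < d)
    (hγmono : StrictMonoOn γ (Set.Ioi 0))
    (hγpos : ∀ σ > (0:ℝ), 0 < γ σ)
    (hμshat : ∀ σ > (0:ℝ), 0 < μ (shat σ))
    (s₁ s₂ l₁ l₂ η E : ℝ → ℝ)
    (hc₁ : Continuous s₁) (hc₂ : Continuous s₂) (hcη : Continuous η)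
    (hpos : ∀ t, 0 < s₁ t ∧ 0 < s₂ t)
    (hl : ∀ t, l₁ t < 0 ∧ l₂ t < 0)
    (hη : ∀ t, η t = (-(l₁ t) / r) * γ (s₁ t) - (-(l₂ t) / (1 - r)) * γ (s₂ t))
    (hE : ∀ t, E t = d * (γ (s₁ t) / r + γ (s₂ t) / (1 - r)) * (l₂ t / (1 - r) - l₁ t / r) +
      d * (l₁ t * μ (shat (s₁ t)) / r ^ 2 + l₂ t * μ (shat (s₂ t)) / (1 - r) ^ 2) *
        (s₁ t - s₂ t))
    (hηd : ∀ᵐ t ∂volume, HasDerivAt η (E t) t) :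
    (∀ t, s₂ t < s₁ t → η t = 0 → E t < 0) ∧
    (∀ t, s₁ t < s₂ t → η t = 0 → 0 < E t) ∧
    volume {t : ℝ | η t = 0 ∧ s₁ t ≠ s₂ t} = 0 := by
  obtain ⟨hr0, hr1⟩ := hr
  have hr1' : 0 < 1 - r := by linarith
  have key : ∀ t, η t = 0 → (s₂ t < s₁ t → E t < 0) ∧ (s₁ t < s₂ t → 0 < E t) := by
    intro t ht0
    obtain ⟨hs1, hs2⟩ := hpos t
    obtain ⟨hl1, hl2⟩ := hl t
    have hγ1 := hγpos _ hs1
    have hγ2 := hγpos _ hs2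
    have hμ1 := hμshat _ hs1
    have hμ2 := hμshat _ hs2
    have heq : (-(l₁ t) / r) * γ (s₁ t) = (-(l₂ t) / (1 - r)) * γ (s₂ t) := by
      have h := hη t; rw [ht0] at h; linarith
    have ha : 0 < -(l₁ t) / r := div_pos (by linarith) hr0
    have hb : 0 < -(l₂ t) / (1 - r) := div_pos (by linarith) hr1'
    have hsum : 0 < γ (s₁ t) / r + γ (s₂ t) / (1 - r) :=
      add_pos (div_pos hγ1 hr0) (div_pos hγ2 hr1')
    have hbr : l₁ t * μ (shat (s₁ t)) / r ^ 2 + l₂ t * μ (shat (s₂ t)) / (1 - r) ^ 2 < 0 := by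
      have h1 : l₁ t * μ (shat (s₁ t)) < 0 := mul_neg_of_neg_of_pos hl1 hμ1
      have h2 : l₂ t * μ (shat (s₂ t)) < 0 := mul_neg_of_neg_of_pos hl2 hμ2
      have := div_neg_of_neg_of_pos h1 (by positivity : (0:ℝ) < r ^ 2)
      have := div_neg_of_neg_of_pos h2 (by positivity : (0:ℝ) < (1 - r) ^ 2)
      linarith
    constructor
    · intro hs
      have hγlt : γ (s₂ t) < γ (s₁ t) := hγmono hs2 hs1 hs
      have h2 : (-(l₁ t)/r) * γ (s₁ t) < (-(l₂ t)/(1-r)) * γ (s₁ t) := by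
        rw [heq]; exact mul_lt_mul_of_pos_left hγlt hb
      have h1 : -(l₁ t)/r < -(l₂ t)/(1-r) := lt_of_mul_lt_mul_right h2 (le_of_lt hγ1)
      rw [neg_div, neg_div] at h1
      have hA : l₂ t / (1 - r) - l₁ t / r < 0 := by linarith
      have ht1 : d * (γ (s₁ t) / r + γ (s₂ t) / (1 - r)) * (l₂ t / (1 - r) - l₁ t / r) < 0 :=
        mul_neg_of_pos_of_neg (mul_pos hd hsum) hA
      have ht2 : d * (l₁ t * μ (shat (s₁ t)) / r ^ 2 + l₂ t * μ (shat (s₂ t)) / (1 - r) ^ 2)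
          * (s₁ t - s₂ t) < 0 :=
        mul_neg_of_neg_of_pos (mul_neg_of_pos_of_neg hd hbr) (by linarith)
      rw [hE]; linarith
    · intro hs
      have hγlt : γ (s₁ t) < γ (s₂ t) := hγmono hs1 hs2 hs
      have h2 : (-(l₂ t)/(1-r)) * γ (s₂ t) < (-(l₁ t)/r) * γ (s₂ t) := by
        rw [← heq]; exact mul_lt_mul_of_pos_left hγlt ha
      have h1 : -(l₂ t)/(1-r) < -(l₁ t)/r := lt_of_mul_lt_mul_right h2 (le_of_lt hγ2)
      rw [neg_div, neg_div] at h1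
      have hA : 0 < l₂ t / (1 - r) - l₁ t / r := by linarith
      have ht1 : 0 < d * (γ (s₁ t) / r + γ (s₂ t) / (1 - r)) * (l₂ t / (1 - r) - l₁ t / r) :=
        mul_pos (mul_pos hd hsum) hA
      have ht2 : 0 < d * (l₁ t * μ (shat (s₁ t)) / r ^ 2 + l₂ t * μ (shat (s₂ t)) / (1 - r) ^ 2)
          * (s₁ t - s₂ t) :=
        mul_pos_of_neg_of_neg (mul_neg_of_pos_of_neg hd hbr) (by linarith)
      rw [hE]; linarith
  refine ⟨fun t h h0 => (key t h0).1 h, fun t h h0 => (key t h0).2 h, ?_⟩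
  set A := {t : ℝ | η t = 0 ∧ s₁ t ≠ s₂ t} with hAdef
  have hAm : MeasurableSet A := by
    have h1 : MeasurableSet {t : ℝ | η t = 0} := (isClosed_eq hcη continuous_const).measurableSet
    have h2 : MeasurableSet {t : ℝ | s₁ t ≠ s₂ t} :=
      ((isClosed_eq hc₁ hc₂).measurableSet).compl
    exact h1.inter h2
  by_contra hvol
  haveI : (ae (volume.restrict A)).NeBot :=
    ae_neBot.mpr (by rwa [Ne, Measure.restrict_eq_zero])
  have h1 := Besicovitch.ae_tendsto_measure_inter_div volume A
  have h2 : ∀ᵐ t ∂volume.restrict A, HasDerivAt η (E t) t := ae_restrict_of_ae hηd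
  have h3 : ∀ᵐ t ∂volume.restrict A, t ∈ A := ae_restrict_mem hAm
  obtain ⟨t, ⟨htd, htD⟩, htη0, htne⟩ := ((h1.and h2).and h3).exists
  have htA : t ∈ A := ⟨htη0, htne⟩
  have hclo : t ∈ closure (A \ {t}) := by
    rw [mem_closure_iff_nhds]
    intro U hU
    obtain ⟨ε, hε, hball⟩ := Metric.nhds_basis_closedBall.mem_iff.1 hU
    have hev := htd.eventually_ne (by norm_num : (1:ENNReal) ≠ 0)
    have hIoc : Set.Ioc (0:ℝ) ε ∈ 𝓝[>] (0:ℝ) := Ioc_mem_nhdsGT_of_mem ⟨le_refl 0, hε⟩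
    obtain ⟨δ, hδ1, hδ2⟩ := (hev.and (eventually_of_mem hIoc (fun x hx => hx))).exists
    have hnum : volume (A ∩ Metric.closedBall t δ) ≠ 0 := by
      intro h; exact hδ1 (by simp [h])
    have hns : ¬ (A ∩ Metric.closedBall t δ ⊆ {t}) := by
      intro hsub
      exact hnum (measure_mono_null hsub (measure_singleton t))
    obtain ⟨y, hy, hy'⟩ := Set.not_subset.1 hns
    exact ⟨y, hball (Metric.closedBall_subset_closedBall hδ2.2 hy.2), hy.1, hy'⟩
  haveI : (𝓝[A \ {t}] t).NeBot := mem_closure_iff_nhdsWithin_neBot.1 hclo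
  have hsub : A \ {t} ⊆ {t}ᶜ := fun y hy => hy.2
  have hslope : Tendsto (slope η t) (𝓝[A \ {t}] t) (𝓝 (E t)) :=
    (hasDerivAt_iff_tendsto_slope.1 htD).mono_left (nhdsWithin_mono t hsub)
  have hzero : Tendsto (slope η t) (𝓝[A \ {t}] t) (𝓝 0) := by
    have hz : ∀ y ∈ A \ {t}, slope η t y = 0 := by
      intro y hy
      have h1 : η y = 0 := hy.1.1
      have h2 : η t = 0 := htA.1
      simp [slope, h1, h2]
    have hev0 : slope η t =ᶠ[𝓝[A \ {t}] t] (fun _ => (0:ℝ)) :=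
      eventually_nhdsWithin_of_forall hz
    exact Tendsto.congr' hev0.symm tendsto_const_nhds
  have hE0 : E t = 0 := tendsto_nhds_unique hslope hzero
  rcases lt_or_gt_of_ne htA.2 with h | h
  · exact absurd hE0 (ne_of_gt ((key t htA.1).2 h))
  · exact absurd hE0 (ne_of_lt ((key t htA.1).1 h))
end

section
/- Let L(s) = (1/2)(s₁-s₂)². Along any trajectory generated by the feedback u*[s] = (1, ŝ(s₁)) if s₁>s₂, (r, ŝ(s₁)) if s₁=s₂, (0, ŝ(s₂)) if s₁<s₂, one has L̇ + (2d/(r(1-r)))L ≤ 0; in particular the diagonal Δ = {s₁ = s₂} is positively invariant under this feedback. -/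
/-!
Away from the diagonal the feedback switches off the harvesting of the *smaller* patch, so the
coupling `d G(s)` contracts `s₁ - s₂` at rate `2d/(r(1-r))` while the remaining harvest term
`-(γ(sᵢ)/·)(s₁ - s₂)` has the sign that pushes the larger coordinate down. Hence
`L̇ + (2d/(r(1-r))) L ≤ 0`, and multiplying by `exp (2d t/(r(1-r)))` turns this into monotonicity:
`L` vanishing at `t = 0` stays zero.
-/

open Real Set

-- The two components of the closed-loop field `F(s, u*[s]) + d G(s)` at `s = (x, y)`.
noncomputable def feedbackField₁ (γ : ℝ → ℝ) (r d x y : ℝ) : ℝ :=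
  (if y < x then -(1 / r) * γ x else if x < y then 0 else -γ x) + d / r * (y - x)

noncomputable def feedbackField₂ (γ : ℝ → ℝ) (r d x y : ℝ) : ℝ :=
  (if y < x then 0 else if x < y then -(1 / (1 - r)) * γ y else -γ y) + d / (1 - r) * (x - y)

theorem lyapunov_dissipation_nonpos {γ : ℝ → ℝ} {r : ℝ} (hr : r ∈ Ioo (0 : ℝ) 1) (d : ℝ)
    {x y : ℝ} (hx : 0 ≤ γ x) (hy : 0 ≤ γ y) :
    (x - y) * (feedbackField₁ γ r d x y - feedbackField₂ γ r d x y)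
      + 2 * d / (r * (1 - r)) * (1 / 2 * (x - y) ^ 2) ≤ 0 := by
  obtain ⟨hr0, hr1⟩ := hr
  have h1r : 0 < 1 - r := sub_pos.mpr hr1
  unfold feedbackField₁ feedbackField₂
  rcases lt_trichotomy y x with hlt | rfl | hgt
  · have hkey : (x - y) * ((-(1 / r) * γ x + d / r * (y - x)) - (0 + d / (1 - r) * (x - y)))
        + 2 * d / (r * (1 - r)) * (1 / 2 * (x - y) ^ 2) = -(γ x / r) * (x - y) := by
      field_simp; ring
    rw [if_pos hlt, if_pos hlt, hkey]
    exact mul_nonpos_of_nonpos_of_nonneg (neg_nonpos.mpr (div_nonneg hx hr0.le))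
      (sub_nonneg.mpr hlt.le)
  · simp
  · have hkey : (x - y) * ((0 + d / r * (y - x)) - (-(1 / (1 - r)) * γ y + d / (1 - r) * (x - y)))
        + 2 * d / (r * (1 - r)) * (1 / 2 * (x - y) ^ 2) = γ y / (1 - r) * (x - y) := by
      field_simp; ring
    rw [if_neg hgt.not_gt, if_neg hgt.not_gt, if_pos hgt, if_pos hgt, hkey]
    exact mul_nonpos_of_nonneg_of_nonpos (div_nonneg hy h1r.le) (sub_nonpos.mpr hgt.le)

theorem antitoneOn_mul_exp_of_hasDerivAt {f f' : ℝ → ℝ} {a c : ℝ}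
    (hf : ∀ t ≥ a, HasDerivAt f (f' t) t) (hle : ∀ t ≥ a, f' t + c * f t ≤ 0) :
    AntitoneOn (fun t => f t * exp (c * t)) (Ici a) := by
  have hderiv : ∀ t ≥ a, HasDerivAt (fun t => f t * exp (c * t))
      ((f' t + c * f t) * exp (c * t)) t := fun t ht => by
    have hexp : HasDerivAt (fun t => exp (c * t)) (exp (c * t) * c) t := by
      simpa using ((hasDerivAt_id t).const_mul c).exp
    exact ((hf t ht).mul hexp).congr_deriv (by ring)
  apply antitoneOn_of_hasDerivWithinAt_nonpos (convex_Ici a)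
    (fun t ht => (hderiv t ht).continuousAt.continuousWithinAt)
    (fun t ht => (hderiv t (interior_subset ht)).hasDerivWithinAt)
  intro t ht
  exact mul_nonpos_of_nonpos_of_nonneg (hle t (interior_subset ht)) (exp_pos _).le

theorem stmt13_general (γ : ℝ → ℝ) (r d : ℝ)
    (hr : r ∈ Set.Ioo (0:ℝ) 1)
    (hγ : ∀ x ≥ (0:ℝ), 0 ≤ γ x)
    (s₁ s₂ L : ℝ → ℝ)
    (hL : ∀ t, L t = (1 / 2) * (s₁ t - s₂ t) ^ 2)
    (hstate : ∀ t ≥ (0:ℝ), 0 ≤ s₁ t ∧ 0 ≤ s₂ t)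
    -- closed-loop dynamics under the feedback u*[s]
    (hode1 : ∀ t ≥ (0:ℝ), HasDerivAt s₁
      ((if s₂ t < s₁ t then -(1 / r) * γ (s₁ t)
        else if s₁ t < s₂ t then 0 else -γ (s₁ t)) + d / r * (s₂ t - s₁ t)) t)
    (hode2 : ∀ t ≥ (0:ℝ), HasDerivAt s₂
      ((if s₂ t < s₁ t then 0
        else if s₁ t < s₂ t then -(1 / (1 - r)) * γ (s₂ t) else -γ (s₂ t)) +
       d / (1 - r) * (s₁ t - s₂ t)) t) :
    (∀ t ≥ (0:ℝ), deriv L t + (2 * d / (r * (1 - r))) * L t ≤ 0) ∧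
    (s₁ 0 = s₂ 0 → ∀ t ≥ (0:ℝ), s₁ t = s₂ t) := by
  set c := 2 * d / (r * (1 - r))
  set L' := fun t => (s₁ t - s₂ t) *
    (feedbackField₁ γ r d (s₁ t) (s₂ t) - feedbackField₂ γ r d (s₁ t) (s₂ t))
  have hL' : ∀ t ≥ (0:ℝ), HasDerivAt L (L' t) t := fun t ht => by
    rw [funext hL]
    exact ((((hode1 t ht).sub (hode2 t ht)).pow 2).const_mul (1 / 2 : ℝ)).congr_deriv
      (by simp only [L', feedbackField₁, feedbackField₂, Pi.sub_apply]; ring)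
  have hdiss : ∀ t ≥ (0:ℝ), L' t + c * L t ≤ 0 := fun t ht => by
    rw [hL t]
    exact lyapunov_dissipation_nonpos hr d (hγ _ (hstate t ht).1) (hγ _ (hstate t ht).2)
  refine ⟨fun t ht => (hL' t ht).deriv ▸ hdiss t ht, fun h0 t ht => ?_⟩
  have hLt : L t * exp (c * t) ≤ L 0 * exp (c * 0) :=
    antitoneOn_mul_exp_of_hasDerivAt hL' hdiss self_mem_Ici ht ht
  rw [hL 0, h0, sub_self] at hLt
  have hsq : (s₁ t - s₂ t) ^ 2 ≤ 0 := by
    nlinarith [hL t, exp_pos (c * t), sq_nonneg (s₁ t - s₂ t)]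
  exact sub_eq_zero.mp (pow_eq_zero_iff two_ne_zero |>.mp (le_antisymm hsq (sq_nonneg _)))

/-- Along the optimal feedback, L = (1/2)(s₁-s₂)² satisfies L̇ + (2d/(r(1-r)))L ≤ 0;
    in particular the diagonal {s₁ = s₂} is positively invariant. -/
theorem stmt13 (γ : ℝ → ℝ) (r d : ℝ)
    (hr : r ∈ Set.Ioo (0:ℝ) 1) (hd : 0 ≤ d)
    (hγ : ∀ x ≥ (0:ℝ), 0 ≤ γ x)
    (s₁ s₂ L : ℝ → ℝ)
    (hL : ∀ t, L t = (1 / 2) * (s₁ t - s₂ t) ^ 2)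
    (hstate : ∀ t ≥ (0:ℝ), 0 ≤ s₁ t ∧ 0 ≤ s₂ t)
    -- closed-loop dynamics under the feedback u*[s]
    (hode1 : ∀ t ≥ (0:ℝ), HasDerivAt s₁
      ((if s₂ t < s₁ t then -(1 / r) * γ (s₁ t)
        else if s₁ t < s₂ t then 0 else -γ (s₁ t)) + d / r * (s₂ t - s₁ t)) t)
    (hode2 : ∀ t ≥ (0:ℝ), HasDerivAt s₂
      ((if s₂ t < s₁ t then 0
        else if s₁ t < s₂ t then -(1 / (1 - r)) * γ (s₂ t) else -γ (s₂ t)) +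
       d / (1 - r) * (s₁ t - s₂ t)) t) :
    (∀ t ≥ (0:ℝ), deriv L t + (2 * d / (r * (1 - r))) * L t ≤ 0) ∧
    (s₁ 0 = s₂ 0 → ∀ t ≥ (0:ℝ), s₁ t = s₂ t) :=
  stmt13_general γ r d hr hγ s₁ s₂ L hL hstate hode1 hode2
end

section
/- For d = 0, the function W₀(x) = r·T(x₁) + (1-r)·T(x₂), where T(σ) = max(0, ∫_{s̲}^{σ} dξ/γ(ξ)), is a viscosity solution of the Hamilton–Jacobi–Bellman equation -1 + max_{(α,s*)∈U(x)} Q(x, -∇W₀(x), (α,s*)) = 0 on ℝ₊² \ 𝒯, with W₀ = 0 on the target 𝒯 = {max(x₁,x₂) ≤ s̲}. -/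
/-!
`W₀` is separable, so a test function touching `W₀` at `x` restricts to test functions touching
`r T` and `(1 - r) T` along the two coordinate lines through `x`. `T` dominates the two smooth
functions `0` and `σ ↦ ∫_{s̲}^σ 1/γ`, and equals the first on `[0, s̲]` and the second on
`[s̲, ∞)`. Touching from above therefore forces the slope `0` or `c / γ(σ)`, and
`c / γ(σ) · β(σ, s) ≤ c` because `γ(σ)` is the largest gain. Touching from below happens at a
point with some `xᵢ > s̲`, where `T` is differentiable with slope `1 / γ(xᵢ)`; there the control
`α ∈ {0, 1}` with `s*` a maximiser defining `γ(xᵢ)` gives `Q = 1`. The fundamental theorem of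
calculus applies because `γ` is locally Lipschitz on `(0, ∞)`.
-/

open Set Filter Topology

section MaximalGain

variable {μ : ℝ → ℝ} {σ σ' g g' s : ℝ}

lemma le_of_isGreatest_gain (hμ : MonotoneOn μ (Ici 0)) (h0 : μ 0 = 0)
    (hg : IsGreatest ((fun s => μ s * (σ - s)) '' Icc 0 σ) g) (hs : 0 ≤ s) :
    μ s * (σ - s) ≤ g := by
  rcases le_total s σ with hsσ | hσs
  · exact hg.2 ⟨s, ⟨hs, hsσ⟩, rfl⟩
  · obtain ⟨t, ⟨ht0, htσ⟩, -⟩ := hg.1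
    have hμs : 0 ≤ μ s := h0 ▸ hμ self_mem_Ici hs hs
    have hg0 : 0 ≤ g := by simpa [h0] using hg.2 ⟨0, ⟨le_rfl, ht0.trans htσ⟩, rfl⟩
    nlinarith

lemma pos_of_isGreatest_gain (hμ : StrictMonoOn μ (Ici 0)) (h0 : μ 0 = 0) (hσ : 0 < σ)
    (hg : IsGreatest ((fun s => μ s * (σ - s)) '' Icc 0 σ) g) : 0 < g := by
  have hμσ : 0 < μ (σ / 2) := h0 ▸ hμ self_mem_Ici (show 0 ≤ σ / 2 by linarith) (by linarith)
  calc 0 < μ (σ / 2) * (σ - σ / 2) := mul_pos hμσ (by linarith)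
    _ ≤ g := hg.2 ⟨σ / 2, ⟨by linarith, by linarith⟩, rfl⟩

lemma isGreatest_gain_le_and_le_add (hμ : MonotoneOn μ (Ici 0)) (h0 : μ 0 = 0) (hσσ' : σ ≤ σ')
    (hg : IsGreatest ((fun s => μ s * (σ - s)) '' Icc 0 σ) g)
    (hg' : IsGreatest ((fun s => μ s * (σ' - s)) '' Icc 0 σ') g') :
    g ≤ g' ∧ g' ≤ g + μ σ' * (σ' - σ) := by
  obtain ⟨s, ⟨hs0, -⟩, rfl⟩ := hg.1
  obtain ⟨s', ⟨hs'0, hs'σ'⟩, rfl⟩ := hg'.1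
  have hμs : 0 ≤ μ s := h0 ▸ hμ self_mem_Ici hs0 hs0
  have hμs' : μ s' ≤ μ σ' := hμ hs'0 (hs'0.trans hs'σ') hs'σ'
  constructor
  · calc μ s * (σ - s) ≤ μ s * (σ' - s) := by gcongr
      _ ≤ _ := le_of_isGreatest_gain hμ h0 hg' hs0
  · calc μ s' * (σ' - s') = μ s' * (σ - s') + μ s' * (σ' - σ) := by ring
      _ ≤ μ s * (σ - s) + μ σ' * (σ' - σ) :=
        add_le_add (le_of_isGreatest_gain hμ h0 hg hs'0)
          (mul_le_mul_of_nonneg_right hμs' (by linarith))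

lemma continuousOn_of_isGreatest_gain {γ : ℝ → ℝ} (hμ : MonotoneOn μ (Ici 0)) (h0 : μ 0 = 0)
    (hγ : ∀ σ > 0, IsGreatest ((fun s => μ s * (σ - s)) '' Icc 0 σ) (γ σ)) :
    ContinuousOn γ (Ioi 0) := by
  intro a ha
  have hlip : LipschitzOnWith (μ (a + 1)).toNNReal γ (Ioo 0 (a + 1)) := by
    refine LipschitzOnWith.of_le_add_mul' _ fun x hx y hy => ?_
    have hμx : 0 ≤ μ x := h0 ▸ hμ self_mem_Ici hx.1.le hx.1.le
    have hμxa : μ x ≤ μ (a + 1) := hμ hx.1.le (hx.1.trans hx.2).le hx.2.le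
    rw [Real.dist_eq]
    rcases le_total x y with hxy | hyx
    · have := (isGreatest_gain_le_and_le_add hμ h0 hxy (hγ x hx.1) (hγ y hy.1)).1
      nlinarith [abs_nonneg (x - y)]
    · have := (isGreatest_gain_le_and_le_add hμ h0 hyx (hγ y hy.1) (hγ x hx.1)).2
      rw [abs_of_nonneg (by linarith)]
      nlinarith
  exact (hlip.continuousOn.continuousAt (Ioo_mem_nhds ha (by linarith))).continuousWithinAt

end MaximalGain

noncomputable def travelTime (γ : ℝ → ℝ) (sb σ : ℝ) : ℝ := max 0 (∫ ξ in sb..σ, 1 / γ ξ)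

section TravelTime

variable {γ : ℝ → ℝ} {sb a b σ : ℝ}

lemma integral_one_div_nonneg (hγ : ∀ σ > 0, 0 < γ σ) (ha : 0 ≤ a) (hab : a ≤ b) :
    0 ≤ ∫ ξ in a..b, 1 / γ ξ := by
  rw [intervalIntegral.integral_of_le hab]
  exact MeasureTheory.setIntegral_nonneg measurableSet_Ioc fun ξ hξ =>
    one_div_nonneg.2 (hγ ξ (ha.trans_lt hξ.1)).le

lemma travelTime_nonneg : 0 ≤ travelTime γ sb σ := le_max_left _ _

lemma integral_le_travelTime : ∫ ξ in sb..σ, 1 / γ ξ ≤ travelTime γ sb σ := le_max_right _ _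

lemma travelTime_eq_zero (hγ : ∀ σ > 0, 0 < γ σ) (hσ : 0 ≤ σ) (hσsb : σ ≤ sb) :
    travelTime γ sb σ = 0 := by
  rw [travelTime, intervalIntegral.integral_symm]
  exact max_eq_left (neg_nonpos.2 (integral_one_div_nonneg hγ hσ hσsb))

lemma travelTime_eq_integral (hγ : ∀ σ > 0, 0 < γ σ) (hsb : 0 ≤ sb) (hσ : sb ≤ σ) :
    travelTime γ sb σ = ∫ ξ in sb..σ, 1 / γ ξ :=
  max_eq_right (integral_one_div_nonneg hγ hsb hσ)

lemma hasDerivAt_integral_one_div (hγc : ContinuousOn γ (Ioi 0)) (hγ : ∀ σ > 0, 0 < γ σ)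
    (hsb : 0 < sb) (ha : 0 < a) :
    HasDerivAt (fun σ => ∫ ξ in sb..σ, 1 / γ ξ) (1 / γ a) a := by
  have hcont : ContinuousOn (fun ξ => 1 / γ ξ) (Ioi 0) :=
    continuousOn_const.div hγc fun ξ hξ => (hγ ξ hξ).ne'
  refine intervalIntegral.integral_hasDerivAt_right ?_
    (hcont.stronglyMeasurableAtFilter isOpen_Ioi a ha) (hcont.continuousAt (Ioi_mem_nhds ha))
  exact (hcont.mono fun ξ hξ => lt_of_lt_of_le (lt_min hsb ha) hξ.1).intervalIntegrable

lemma hasDerivAt_travelTime (hγc : ContinuousOn γ (Ioi 0)) (hγ : ∀ σ > 0, 0 < γ σ)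
    (hsb : 0 < sb) (ha : sb < a) : HasDerivAt (travelTime γ sb) (1 / γ a) a := by
  refine (hasDerivAt_integral_one_div hγc hγ hsb (hsb.trans ha)).congr_of_eventuallyEq ?_
  filter_upwards [Ioi_mem_nhds ha] with σ hσ
  exact travelTime_eq_integral hγ hsb.le (le_of_lt hσ)

end TravelTime

lemma IsLocalMax.eq_of_hasDerivAt_of_le {f g ψ : ℝ → ℝ} {a p q : ℝ}
    (hmax : IsLocalMax (fun t => f t - ψ t) a) (hgf : g ≤ f) (hga : g a = f a)
    (hg : HasDerivAt g q a) (hψ : HasDerivAt ψ p a) : p = q := by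
  have hmax' : IsLocalMax (fun t => g t - ψ t) a := by
    filter_upwards [hmax] with t ht
    linarith [hgf t]
  linarith [hmax'.hasDerivAt_eq_zero (hg.sub hψ)]

section Viscosity

variable {γ ψ : ℝ → ℝ} {sb a c p : ℝ}

lemma eq_zero_or_eq_div_of_isLocalMax (hγc : ContinuousOn γ (Ioi 0)) (hγ : ∀ σ > 0, 0 < γ σ)
    (hsb : 0 < sb) (hc : 0 ≤ c) (hmax : IsLocalMax (fun t => c * travelTime γ sb t - ψ t) a)
    (ha : 0 ≤ a) (hψ : HasDerivAt ψ p a) : p = 0 ∨ (sb ≤ a ∧ p = c / γ a) := by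
  rcases le_total a sb with has | hsa
  · refine Or.inl (hmax.eq_of_hasDerivAt_of_le (g := fun _ => 0) ?_ ?_ (hasDerivAt_const a 0) hψ)
    · exact fun t => mul_nonneg hc travelTime_nonneg
    · simp [travelTime_eq_zero hγ ha has]
  · refine Or.inr ⟨hsa, ?_⟩
    have := hmax.eq_of_hasDerivAt_of_le (g := fun σ => c * ∫ ξ in sb..σ, 1 / γ ξ) ?_ ?_
      ((hasDerivAt_integral_one_div hγc hγ hsb (hsb.trans_le hsa)).const_mul c) hψ
    · rw [this, mul_one_div]
    · exact fun t => mul_le_mul_of_nonneg_left integral_le_travelTime hc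
    · simp [travelTime_eq_integral hγ hsb.le hsa]

lemma mul_gain_le_of_isLocalMax {μ : ℝ → ℝ} (hμ : MonotoneOn μ (Ici 0)) (h0 : μ 0 = 0)
    (hγg : ∀ σ > 0, IsGreatest ((fun s => μ s * (σ - s)) '' Icc 0 σ) (γ σ))
    (hγc : ContinuousOn γ (Ioi 0)) (hγ : ∀ σ > 0, 0 < γ σ) (hsb : 0 < sb) (hc : 0 < c)
    (hmax : IsLocalMax (fun t => c * travelTime γ sb t - ψ t) a) (ha : 0 ≤ a)
    (hψ : HasDerivAt ψ p a) {s : ℝ} (hs : 0 ≤ s) : p * (μ s * (a - s)) ≤ c := by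
  rcases eq_zero_or_eq_div_of_isLocalMax hγc hγ hsb hc.le hmax ha hψ with rfl | ⟨hsa, rfl⟩
  · simpa using hc.le
  · have ha' : 0 < a := hsb.trans_le hsa
    calc c / γ a * (μ s * (a - s)) ≤ c / γ a * γ a :=
          mul_le_mul_of_nonneg_left (le_of_isGreatest_gain hμ h0 (hγg a ha') hs)
            (div_nonneg hc.le (hγ a ha').le)
      _ = c := div_mul_cancel₀ c (hγ a ha').ne'

lemma mul_eq_of_isLocalMin (hγc : ContinuousOn γ (Ioi 0)) (hγ : ∀ σ > 0, 0 < γ σ)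
    (hsb : 0 < sb) (hmin : IsLocalMin (fun t => c * travelTime γ sb t - ψ t) a) (ha : sb < a)
    (hψ : HasDerivAt ψ p a) : p * γ a = c := by
  have := hmin.hasDerivAt_eq_zero (((hasDerivAt_travelTime hγc hγ hsb ha).const_mul c).sub hψ)
  rw [mul_one_div, sub_eq_zero] at this
  rw [← this, div_mul_cancel₀ _ (hγ a (hsb.trans ha)).ne']

end Viscosity

section Slices

variable {f : ℝ → ℝ} {c d : ℝ} {φ : ℝ × ℝ → ℝ} {x : ℝ × ℝ}

lemma IsLocalMax.fst_slice (h : IsLocalMax (fun y => c * f y.1 + d * f y.2 - φ y) x) :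
    IsLocalMax (fun t => c * f t - φ (t, x.2)) x.1 := by
  filter_upwards [h.comp_continuous (g := fun t => (t, x.2)) (b := x.1) (by fun_prop)] with t ht
  simp only [Function.comp] at ht
  linarith

lemma IsLocalMax.snd_slice (h : IsLocalMax (fun y => c * f y.1 + d * f y.2 - φ y) x) :
    IsLocalMax (fun t => d * f t - φ (x.1, t)) x.2 := by
  filter_upwards [h.comp_continuous (g := fun t => (x.1, t)) (b := x.2) (by fun_prop)] with t ht
  simp only [Function.comp] at ht
  linarith

lemma IsLocalMin.fst_slice (h : IsLocalMin (fun y => c * f y.1 + d * f y.2 - φ y) x) :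
    IsLocalMin (fun t => c * f t - φ (t, x.2)) x.1 := by
  filter_upwards [h.comp_continuous (g := fun t => (t, x.2)) (b := x.1) (by fun_prop)] with t ht
  simp only [Function.comp] at ht
  linarith

lemma IsLocalMin.snd_slice (h : IsLocalMin (fun y => c * f y.1 + d * f y.2 - φ y) x) :
    IsLocalMin (fun t => d * f t - φ (x.1, t)) x.2 := by
  filter_upwards [h.comp_continuous (g := fun t => (x.1, t)) (b := x.2) (by fun_prop)] with t ht
  simp only [Function.comp] at ht
  linarith

lemma DifferentiableAt.hasDerivAt_fst_slice (h : DifferentiableAt ℝ φ x) :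
    HasDerivAt (fun t => φ (t, x.2)) (fderiv ℝ φ x (1, 0)) x.1 :=
  h.hasFDerivAt.comp_hasDerivAt x.1 ((hasDerivAt_id x.1).prodMk (hasDerivAt_const x.1 x.2))

lemma DifferentiableAt.hasDerivAt_snd_slice (h : DifferentiableAt ℝ φ x) :
    HasDerivAt (fun t => φ (x.1, t)) (fderiv ℝ φ x (0, 1)) x.2 :=
  h.hasFDerivAt.comp_hasDerivAt x.2 ((hasDerivAt_const x.2 x.1).prodMk (hasDerivAt_id x.2))

end Slices

/-- `Q(x, -p, u)` of the paper, for the control `u = (α, s*)`. -/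
noncomputable def gain (μ : ℝ → ℝ) (r : ℝ) (x p u : ℝ × ℝ) : ℝ :=
  u.1 * (p.1 * (μ u.2 * (x.1 - u.2))) / r + (1 - u.1) * (p.2 * (μ u.2 * (x.2 - u.2))) / (1 - r)

def gains (μ : ℝ → ℝ) (r : ℝ) (x p : ℝ × ℝ) : Set ℝ :=
  {q | ∃ u : ℝ × ℝ, u.1 ∈ Icc 0 1 ∧ u.2 ∈ Icc 0 (u.1 * x.1 + (1 - u.1) * x.2) ∧
    q = gain μ r x p u}

section Gains

variable {μ : ℝ → ℝ} {r s : ℝ} {x p : ℝ × ℝ}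

lemma sSup_gains_le_one (hr0 : 0 < r) (hr1 : r < 1)
    (h1 : ∀ s, 0 ≤ s → p.1 * (μ s * (x.1 - s)) ≤ r)
    (h2 : ∀ s, 0 ≤ s → p.2 * (μ s * (x.2 - s)) ≤ 1 - r) : sSup (gains μ r x p) ≤ 1 := by
  refine Real.sSup_le ?_ zero_le_one
  rintro _ ⟨u, ⟨hα0, hα1⟩, ⟨hs, -⟩, rfl⟩
  have e1 : u.1 * (p.1 * (μ u.2 * (x.1 - u.2))) / r ≤ u.1 := by
    rw [div_le_iff₀ hr0]
    exact mul_le_mul_of_nonneg_left (h1 _ hs) hα0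
  have e2 : (1 - u.1) * (p.2 * (μ u.2 * (x.2 - u.2))) / (1 - r) ≤ 1 - u.1 := by
    rw [div_le_iff₀ (by linarith)]
    exact mul_le_mul_of_nonneg_left (h2 _ hs) (by linarith)
  rw [gain]
  linarith

lemma abs_gain_le (hμ : MonotoneOn μ (Ici 0)) (h0 : μ 0 = 0) {σ M : ℝ} (hs : 0 ≤ s)
    (hsM : s ≤ M) (hσ : 0 ≤ σ) (hσM : σ ≤ M) : |μ s * (σ - s)| ≤ μ M * M := by
  have hμs : 0 ≤ μ s := h0 ▸ hμ self_mem_Ici hs hs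
  rw [abs_mul, abs_of_nonneg hμs]
  exact mul_le_mul (hμ hs (hs.trans hsM) hsM) (abs_sub_le_of_nonneg_of_le hσ hσM hs hsM)
    (abs_nonneg _) (hμs.trans (hμ hs (hs.trans hsM) hsM))

lemma bddAbove_gains (hμ : MonotoneOn μ (Ici 0)) (h0 : μ 0 = 0) (hr0 : 0 < r) (hr1 : r < 1)
    (hx1 : 0 ≤ x.1) (hx2 : 0 ≤ x.2) : BddAbove (gains μ r x p) := by
  set M := max x.1 x.2
  have hweight : ∀ α ∈ Icc (0 : ℝ) 1, ∀ z, α * z ≤ |z| := fun α hα z =>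
    (mul_le_mul_of_nonneg_left (le_abs_self z) hα.1).trans
      (mul_le_of_le_one_left (abs_nonneg z) hα.2)
  refine ⟨|p.1| * (μ M * M) / r + |p.2| * (μ M * M) / (1 - r), ?_⟩
  rintro _ ⟨u, hα, ⟨hs, hsx⟩, rfl⟩
  have hsM : u.2 ≤ M := hsx.trans <| by
    nlinarith [hα.1, hα.2, le_max_left x.1 x.2, le_max_right x.1 x.2]
  have e1 : u.1 * (p.1 * (μ u.2 * (x.1 - u.2))) ≤ |p.1| * (μ M * M) := by
    refine (hweight _ hα _).trans ?_
    rw [abs_mul]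
    exact mul_le_mul_of_nonneg_left (abs_gain_le hμ h0 hs hsM hx1 (le_max_left _ _))
      (abs_nonneg _)
  have e2 : (1 - u.1) * (p.2 * (μ u.2 * (x.2 - u.2))) ≤ |p.2| * (μ M * M) := by
    refine (hweight _ ⟨by linarith [hα.2], by linarith [hα.1]⟩ _).trans ?_
    rw [abs_mul]
    exact mul_le_mul_of_nonneg_left (abs_gain_le hμ h0 hs hsM hx2 (le_max_right _ _))
      (abs_nonneg _)
  rw [gain]
  exact add_le_add (div_le_div_of_nonneg_right e1 hr0.le)
    (div_le_div_of_nonneg_right e2 (by linarith))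

lemma one_mem_gains_of_fst (hr : r ≠ 0) (hs : s ∈ Icc 0 x.1)
    (hp : p.1 * (μ s * (x.1 - s)) = r) : 1 ∈ gains μ r x p :=
  ⟨(1, s), ⟨zero_le_one, le_rfl⟩, by simpa using hs, by simp [gain, hp, hr]⟩

lemma one_mem_gains_of_snd (hr : 1 - r ≠ 0) (hs : s ∈ Icc 0 x.2)
    (hp : p.2 * (μ s * (x.2 - s)) = 1 - r) : 1 ∈ gains μ r x p :=
  ⟨(0, s), ⟨le_rfl, zero_le_one⟩, by simpa using hs, by simp [gain, hp, hr]⟩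

lemma one_le_sSup_gains {γ : ℝ → ℝ} (hμ : MonotoneOn μ (Ici 0)) (h0 : μ 0 = 0)
    (hγ : ∀ σ > 0, IsGreatest ((fun s => μ s * (σ - s)) '' Icc 0 σ) (γ σ))
    (hr0 : 0 < r) (hr1 : r < 1) (hx1 : 0 ≤ x.1) (hx2 : 0 ≤ x.2)
    (hp : (0 < x.1 ∧ p.1 * γ x.1 = r) ∨ (0 < x.2 ∧ p.2 * γ x.2 = 1 - r)) :
    1 ≤ sSup (gains μ r x p) := by
  refine le_csSup (bddAbove_gains hμ h0 hr0 hr1 hx1 hx2) ?_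
  rcases hp with ⟨hx, hp⟩ | ⟨hx, hp⟩
  · obtain ⟨s, hs, hgs : μ s * (x.1 - s) = γ x.1⟩ := (hγ x.1 hx).1
    exact one_mem_gains_of_fst hr0.ne' hs (hgs ▸ hp)
  · obtain ⟨s, hs, hgs : μ s * (x.2 - s) = γ x.2⟩ := (hγ x.2 hx).1
    exact one_mem_gains_of_snd (sub_pos.2 hr1).ne' hs (hgs ▸ hp)

end Gains

theorem stmt15_general (μ γ : ℝ → ℝ) (r sb : ℝ)
    (hr : r ∈ Set.Ioo (0:ℝ) 1) (hsb : 0 < sb)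
    (hmono : StrictMonoOn μ (Set.Ici 0))
    (h0 : μ 0 = 0)
    (hγ : ∀ σ > (0:ℝ), IsGreatest ((fun s : ℝ => μ s * (σ - s)) '' Set.Icc 0 σ) (γ σ))
    (T : ℝ → ℝ) (W : ℝ × ℝ → ℝ)
    (Q : ℝ × ℝ → ℝ × ℝ → ℝ × ℝ → ℝ) (H : ℝ × ℝ → ℝ × ℝ → ℝ)
    (hT : ∀ σ, T σ = max 0 (∫ ξ in sb..σ, 1 / γ ξ))
    (hW : ∀ x : ℝ × ℝ, W x = r * T x.1 + (1 - r) * T x.2)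
    (hQ : ∀ x lam u, Q x lam u = -(u.1 * lam.1 / r * (μ u.2 * (x.1 - u.2)) +
      (1 - u.1) * lam.2 / (1 - r) * (μ u.2 * (x.2 - u.2))))
    (hH : ∀ x p, H x p = -1 + sSup {q : ℝ | ∃ u : ℝ × ℝ,
      u.1 ∈ Set.Icc (0:ℝ) 1 ∧ u.2 ∈ Set.Icc (0:ℝ) (u.1 * x.1 + (1 - u.1) * x.2) ∧
      q = Q x (-p.1, -p.2) u}) :
    (∀ x : ℝ × ℝ, 0 ≤ x.1 → 0 ≤ x.2 → ¬ max x.1 x.2 ≤ sb →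
      (∀ φ : ℝ × ℝ → ℝ, ContDiff ℝ 1 φ → IsLocalMax (fun y => W y - φ y) x →
        H x (fderiv ℝ φ x (1, 0), fderiv ℝ φ x (0, 1)) ≤ 0) ∧
      (∀ φ : ℝ × ℝ → ℝ, ContDiff ℝ 1 φ → IsLocalMin (fun y => W y - φ y) x →
        0 ≤ H x (fderiv ℝ φ x (1, 0), fderiv ℝ φ x (0, 1)))) ∧
    (∀ x : ℝ × ℝ, 0 ≤ x.1 → 0 ≤ x.2 → max x.1 x.2 ≤ sb → W x = 0) := by
  obtain ⟨hr0, hr1⟩ := hr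
  have hμ : MonotoneOn μ (Ici 0) := hmono.monotoneOn
  have hγp : ∀ σ > 0, 0 < γ σ := fun σ hσ => pos_of_isGreatest_gain hmono h0 hσ (hγ σ hσ)
  have hγc : ContinuousOn γ (Ioi 0) := continuousOn_of_isGreatest_gain hμ h0 hγ
  obtain rfl : T = travelTime γ sb := funext hT
  have hQg : ∀ x p u, Q x (-p.1, -p.2) u = gain μ r x p u := fun x p u => by
    rw [hQ, gain]
    ring
  have hHg : ∀ x p, H x p = -1 + sSup (gains μ r x p) := by
    simpa only [hQg, gains] using hH
  simp only [hW, hHg]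
  refine ⟨fun x hx1 hx2 hxT => ⟨fun φ hφ hmax => ?_, fun φ hφ hmin => ?_⟩,
    fun x hx1 hx2 hxT => ?_⟩
  · have hφx := hφ.differentiable one_ne_zero x
    have := sSup_gains_le_one (x := x) (p := (_, _)) hr0 hr1
      (fun s hs => mul_gain_le_of_isLocalMax hμ h0 hγ hγc hγp hsb hr0 hmax.fst_slice hx1
        hφx.hasDerivAt_fst_slice hs)
      (fun s hs => mul_gain_le_of_isLocalMax hμ h0 hγ hγc hγp hsb (sub_pos.2 hr1)
        hmax.snd_slice hx2 hφx.hasDerivAt_snd_slice hs)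
    linarith
  · have hφx := hφ.differentiable one_ne_zero x
    have := one_le_sSup_gains (p := (_, _)) hμ h0 hγ hr0 hr1 hx1 hx2 <| by
      rcases lt_max_iff.1 (not_le.1 hxT) with hx | hx
      · exact Or.inl ⟨hsb.trans hx, mul_eq_of_isLocalMin hγc hγp hsb hmin.fst_slice hx
          hφx.hasDerivAt_fst_slice⟩
      · exact Or.inr ⟨hsb.trans hx, mul_eq_of_isLocalMin hγc hγp hsb hmin.snd_slice hx
          hφx.hasDerivAt_snd_slice⟩
    linarith
  · rw [travelTime_eq_zero hγp hx1 ((le_max_left _ _).trans hxT),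
      travelTime_eq_zero hγp hx2 ((le_max_right _ _).trans hxT)]
    ring

/-- For d = 0, W₀(x) = r T(x₁) + (1-r) T(x₂) with T(σ) = max(0, ∫_{s̲}^σ dξ/γ(ξ)) is a
    viscosity solution of the HJB equation -1 + max_{u ∈ U(x)} Q(x, -∇W₀(x), u) = 0 on
    ℝ₊² \ 𝒯, with W₀ = 0 on the target 𝒯 = {max(x₁,x₂) ≤ s̲}. -/
theorem stmt15 (μ γ : ℝ → ℝ) (r sb : ℝ)
    (hr : r ∈ Set.Ioo (0:ℝ) 1) (hsb : 0 < sb)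
    (hC1 : ContDiff ℝ 1 μ) (hmono : StrictMonoOn μ (Set.Ici 0))
    (hconc : ConcaveOn ℝ (Set.Ici 0) μ) (h0 : μ 0 = 0)
    (hγ : ∀ σ > (0:ℝ), IsGreatest ((fun s : ℝ => μ s * (σ - s)) '' Set.Icc 0 σ) (γ σ))
    (T : ℝ → ℝ) (W : ℝ × ℝ → ℝ)
    (Q : ℝ × ℝ → ℝ × ℝ → ℝ × ℝ → ℝ) (H : ℝ × ℝ → ℝ × ℝ → ℝ)
    (hT : ∀ σ, T σ = max 0 (∫ ξ in sb..σ, 1 / γ ξ))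
    (hW : ∀ x : ℝ × ℝ, W x = r * T x.1 + (1 - r) * T x.2)
    (hQ : ∀ x lam u, Q x lam u = -(u.1 * lam.1 / r * (μ u.2 * (x.1 - u.2)) +
      (1 - u.1) * lam.2 / (1 - r) * (μ u.2 * (x.2 - u.2))))
    (hH : ∀ x p, H x p = -1 + sSup {q : ℝ | ∃ u : ℝ × ℝ,
      u.1 ∈ Set.Icc (0:ℝ) 1 ∧ u.2 ∈ Set.Icc (0:ℝ) (u.1 * x.1 + (1 - u.1) * x.2) ∧
      q = Q x (-p.1, -p.2) u}) :
    (∀ x : ℝ × ℝ, 0 ≤ x.1 → 0 ≤ x.2 → ¬ max x.1 x.2 ≤ sb →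
      (∀ φ : ℝ × ℝ → ℝ, ContDiff ℝ 1 φ → IsLocalMax (fun y => W y - φ y) x →
        H x (fderiv ℝ φ x (1, 0), fderiv ℝ φ x (0, 1)) ≤ 0) ∧
      (∀ φ : ℝ × ℝ → ℝ, ContDiff ℝ 1 φ → IsLocalMin (fun y => W y - φ y) x →
        0 ≤ H x (fderiv ℝ φ x (1, 0), fderiv ℝ φ x (0, 1)))) ∧
    (∀ x : ℝ × ℝ, 0 ≤ x.1 → 0 ≤ x.2 → max x.1 x.2 ≤ sb → W x = 0) :=
  stmt15_general μ γ r sb hr hsb hmono h0 hγ T W Q H hT hW hQ hH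
end

section
/- Let t_Δ be the first time the optimal trajectory (under the feedback u*) from x with x₁ ≠ x₂ reaches the diagonal Δ. Then t_Δ ≤ (r(1-r)/d)·log(1 + d|x₁-x₂|/(M₋ r(1-r))), where M₋ = min(γ(x₂)/r, γ(x₁)/(1-r)); in particular t_Δ → 0 as d → ∞. -/
/-!
Say `x₂ < x₁`. As long as `s₁ > s₂`, only `s₁` is consumed and `s₂` keeps increasing, so
`s₁ > s₂ ≥ x₂` and, `γ` being increasing, `γ (s₁) / r ≥ M₋`. The gap `δ = s₁ - s₂` therefore obeys
`δ' ≤ -(d / (r (1 - r))) δ - M₋`, and comparison with the linear equation (Grönwall) forces `δ`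
to vanish no later than the solution of `y' = -(d / (r (1 - r))) y - M₋`, `y 0 = x₁ - x₂`,
which does so at the stated time. The case `x₁ < x₂` is symmetric, and the bound is
`O(log d / d)`.
-/

open scoped Classical

open Set Filter Topology Real

lemma gronwallBound_neg_log_one_add_eq_zero {δ c M : ℝ} (hδ : 0 ≤ δ) (hc : 0 < c) (hM : 0 < M) :
    gronwallBound δ (-c) (-M) (log (1 + c * δ / M) / c) = 0 := by
  have hR : 0 < 1 + c * δ / M := by positivity
  have hexp : exp (-c * (log (1 + c * δ / M) / c)) = M / (M + c * δ) := by
    rw [show -c * (log (1 + c * δ / M) / c) = -log (1 + c * δ / M) by field_simp,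
      exp_neg, exp_log hR]
    field_simp
  rw [gronwallBound_of_K_ne_0 (neg_ne_zero.2 hc.ne')]
  dsimp only
  rw [hexp]
  field_simp
  ring

/-- `log (1 + c f₀ / M) / c` is the time at which the solution of `y' = -c y - M`, `y 0 = f₀`,
vanishes. -/
lemma exists_eq_zero_le_of_deriv_le_neg {f f' : ℝ → ℝ} {c M : ℝ} (hc : 0 < c) (hM : 0 < M)
    (hf0 : 0 < f 0) (hf : ContinuousOn f (Ici 0))
    (hderiv : ∀ t, 0 ≤ t → (∀ s ∈ Icc 0 t, 0 < f s) →
      HasDerivAt f (f' t) t ∧ f' t ≤ -c * f t + -M) :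
    ∃ t, 0 ≤ t ∧ f t = 0 ∧ t ≤ log (1 + c * f 0 / M) / c := by
  set T := log (1 + c * f 0 / M) / c
  have hT : 0 ≤ T := div_nonneg (log_nonneg (by simp only [le_add_iff_nonneg_right]; positivity))
    hc.le
  by_contra! hlate
  have hpos : ∀ s ∈ Icc 0 T, 0 < f s := by
    intro s hs
    by_contra! hs0
    obtain ⟨u, hu, hfu⟩ := intermediate_value_Icc' hs.1 (hf.mono (Icc_subset_Ici_self))
      ⟨hs0, hf0.le⟩
    exact (hlate u hu.1 hfu).not_ge (hu.2.trans hs.2)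
  have hbound := le_gronwallBound_of_liminf_deriv_right_le (f' := f') (K := -c) (ε := -M)
    (hf.mono Icc_subset_Ici_self)
    (fun t ht _ hr => ((hderiv t ht.1 fun s hs => hpos s ⟨hs.1, hs.2.trans ht.2.le⟩).1
      |>.hasDerivWithinAt.liminf_right_slope_le hr))
    le_rfl (fun t ht => (hderiv t ht.1 fun s hs => hpos s ⟨hs.1, hs.2.trans ht.2.le⟩).2)
    T ⟨hT, le_rfl⟩
  rw [sub_zero, gronwallBound_neg_log_one_add_eq_zero hf0.le hc hM] at hbound
  exact (hpos T ⟨hT, le_rfl⟩).not_ge hbound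

/-- `a`, `b` are the concentrations of two compartments with volume fractions `ρ`, `1 - ρ`,
exchanging at rate `d`, of which only the richer one `a` is consumed. -/
lemma exists_eq_le_of_upper_depleted {γ a b : ℝ → ℝ} {ρ d M : ℝ} (hρ0 : 0 < ρ) (hρ1 : ρ < 1)
    (hd : 0 < d) (hM : 0 < M) (hMγ : M ≤ γ (b 0) / ρ) (hγ : MonotoneOn γ (Ici (b 0)))
    (hlt : b 0 < a 0)
    (ha : ∀ t, 0 ≤ t → ContinuousAt a t) (hb : ∀ t, 0 ≤ t → ContinuousAt b t)
    (hodea : ∀ t, 0 ≤ t → b t < a t →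
      HasDerivAt a (-(1 / ρ) * γ (a t) + d / ρ * (b t - a t)) t)
    (hodeb : ∀ t, 0 ≤ t → b t < a t → HasDerivAt b (d / (1 - ρ) * (a t - b t)) t) :
    ∃ t, 0 ≤ t ∧ a t = b t ∧
      t ≤ ρ * (1 - ρ) / d * log (1 + d * (a 0 - b 0) / (M * ρ * (1 - ρ))) := by
  have hρ1' : 0 < 1 - ρ := sub_pos.2 hρ1
  set c := d / (ρ * (1 - ρ))
  have hc : 0 < c := by positivity
  have hderiv : ∀ t, 0 ≤ t → (∀ s ∈ Icc 0 t, 0 < (a - b) s) →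
      HasDerivAt (a - b) (-(1 / ρ) * γ (a t) - c * (a t - b t)) t ∧
      -(1 / ρ) * γ (a t) - c * (a t - b t) ≤ -c * (a - b) t + -M := by
    intro t ht hpos
    have hlt' : ∀ s ∈ Icc 0 t, b s < a s := fun s hs => sub_pos.1 (hpos s hs)
    have hltt : b t < a t := hlt' t ⟨ht, le_rfl⟩
    -- while `a > b` the lower compartment only gains mass, so `a t > b t ≥ b 0`
    have hbt : b 0 ≤ b t :=
      monotoneOn_of_hasDerivWithinAt_nonneg (convex_Icc 0 t)
        (fun s hs => (hb s hs.1).continuousWithinAt)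
        (fun s hs =>
          (hodeb s (interior_subset hs).1 (hlt' s (interior_subset hs))).hasDerivWithinAt)
        (fun s hs => mul_nonneg (div_pos hd hρ1').le (sub_pos.2 (hlt' s (interior_subset hs))).le)
        ⟨le_rfl, ht⟩ ⟨ht, le_rfl⟩ ht
    have hdeplete : M ≤ γ (a t) / ρ :=
      hMγ.trans (div_le_div_of_nonneg_right
        (hγ self_mem_Ici (hbt.trans hltt.le) (hbt.trans hltt.le)) hρ0.le)
    refine ⟨((hodea t ht hltt).sub (hodeb t ht hltt)).congr_deriv ?_, ?_⟩
    · simp only [c]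
      field_simp
      ring
    rw [Pi.sub_apply, neg_mul, one_div_mul_eq_div]
    linarith
  obtain ⟨t, ht0, hft, htT⟩ := exists_eq_zero_le_of_deriv_le_neg (f := a - b) hc hM
    (sub_pos.2 hlt) (fun t ht => ((ha t ht).sub (hb t ht)).continuousWithinAt) hderiv
  refine ⟨t, ht0, sub_eq_zero.1 hft, htT.trans_eq ?_⟩
  simp only [c, Pi.sub_apply]
  field_simp

lemma tendsto_div_mul_log_one_add_mul_atTop (K : ℝ) {A : ℝ} (hA : 0 ≤ A) :
    Tendsto (fun δ => K / δ * log (1 + δ * A)) atTop (𝓝 0) := by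
  rcases hA.eq_or_lt with rfl | hA
  · simp
  have hlin : Tendsto (fun δ => 1 + δ * A) atTop atTop :=
    tendsto_atTop_add_const_left _ 1 (tendsto_id.atTop_mul_const hA)
  have hO : (fun δ => 1 + δ * A) =O[atTop] id :=
    (Asymptotics.isLittleO_const_id_atTop 1).isBigO.add
      ((Asymptotics.isBigO_refl _ _).const_mul_left A |>.congr_left fun δ => mul_comm A δ)
  have := ((isLittleO_log_id_atTop.comp_tendsto hlin).trans_isBigO hO).tendsto_div_nhds_zero
  rw [← mul_zero K]
  refine (this.const_mul K).congr fun δ => ?_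
  simp only [Function.comp_apply, id]
  ring

/-- The first time t_Δ the optimal trajectory from x with x₁ ≠ x₂ reaches the diagonal
    satisfies t_Δ ≤ (r(1-r)/d) log(1 + d|x₁-x₂|/(M₋ r(1-r))), with
    M₋ = min(γ(x₂)/r, γ(x₁)/(1-r)); this bound tends to 0 as d → ∞. -/
theorem stmt17 (γ : ℝ → ℝ) (r d sb x₁ x₂ : ℝ)
    (hr : r ∈ Set.Ioo (0:ℝ) 1) (hd : 0 < d) (hsb : 0 < sb)
    (hx : x₁ ≠ x₂) (hx₁ : sb < x₁) (hx₂ : sb < x₂)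
    (hγpos : ∀ σ > (0:ℝ), 0 < γ σ)
    (hγmono : StrictMonoOn γ (Set.Ioi 0))
    (s₁ s₂ : ℝ → ℝ)
    (hinit : s₁ 0 = x₁ ∧ s₂ 0 = x₂)
    -- closed-loop dynamics under the optimal feedback u*
    (hode1 : ∀ t ≥ (0:ℝ), HasDerivAt s₁
      ((if s₂ t < s₁ t then -(1 / r) * γ (s₁ t)
        else if s₁ t < s₂ t then 0 else -γ (s₁ t)) + d / r * (s₂ t - s₁ t)) t)
    (hode2 : ∀ t ≥ (0:ℝ), HasDerivAt s₂
      ((if s₂ t < s₁ t then 0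
        else if s₁ t < s₂ t then -(1 / (1 - r)) * γ (s₂ t) else -γ (s₂ t)) +
       d / (1 - r) * (s₁ t - s₂ t)) t) :
    (∃ tΔ : ℝ, 0 ≤ tΔ ∧ s₁ tΔ = s₂ tΔ ∧
      tΔ ≤ r * (1 - r) / d *
        Real.log (1 + d * |x₁ - x₂| / (min (γ x₂ / r) (γ x₁ / (1 - r)) * r * (1 - r)))) ∧
    Filter.Tendsto (fun δ : ℝ => r * (1 - r) / δ *
        Real.log (1 + δ * |x₁ - x₂| / (min (γ x₂ / r) (γ x₁ / (1 - r)) * r * (1 - r))))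
      Filter.atTop (nhds 0) := by
  obtain ⟨hr0, hr1⟩ := hr
  obtain ⟨rfl, rfl⟩ := hinit
  have hpos₁ : 0 < s₁ 0 := hsb.trans hx₁
  have hpos₂ : 0 < s₂ 0 := hsb.trans hx₂
  have hM : 0 < min (γ (s₂ 0) / r) (γ (s₁ 0) / (1 - r)) :=
    lt_min (div_pos (hγpos _ hpos₂) hr0) (div_pos (hγpos _ hpos₁) (sub_pos.2 hr1))
  refine ⟨?_, ?_⟩
  · rcases hx.lt_or_gt with h12 | h21
    · obtain ⟨t, ht0, hmeet, htT⟩ := exists_eq_le_of_upper_depleted (γ := γ) (a := s₂) (b := s₁)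
        (sub_pos.2 hr1) (sub_lt_self 1 hr0) hd hM (min_le_right _ _)
        (hγmono.monotoneOn.mono fun σ hσ => hpos₁.trans_le hσ) h12
        (fun t ht => (hode2 t ht).continuousAt) (fun t ht => (hode1 t ht).continuousAt)
        (fun t ht h => by simpa [h, h.not_gt] using hode2 t ht)
        (fun t ht h => by simpa [h, h.not_gt] using hode1 t ht)
      refine ⟨t, ht0, hmeet.symm, htT.trans_eq ?_⟩
      rw [abs_sub_comm, abs_of_pos (sub_pos.2 h12), sub_sub_cancel]
      ring_nf
    · obtain ⟨t, ht0, hmeet, htT⟩ := exists_eq_le_of_upper_depleted (γ := γ) (a := s₁) (b := s₂)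
        hr0 hr1 hd hM (min_le_left _ _)
        (hγmono.monotoneOn.mono fun σ hσ => hpos₂.trans_le hσ) h21
        (fun t ht => (hode1 t ht).continuousAt) (fun t ht => (hode2 t ht).continuousAt)
        (fun t ht h => by simpa [h] using hode1 t ht)
        (fun t ht h => by simpa [h] using hode2 t ht)
      refine ⟨t, ht0, hmeet, htT.trans_eq ?_⟩
      rw [abs_of_pos (sub_pos.2 h21)]
  · convert tendsto_div_mul_log_one_add_mul_atTop (r * (1 - r))
      (A := |s₁ 0 - s₂ 0| / (min (γ (s₂ 0) / r) (γ (s₁ 0) / (1 - r)) * r * (1 - r)))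
      (by have := sub_pos.2 hr1; positivity) using 4
    rw [mul_div_assoc]
end
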